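/- arXiv:1711.06749 — 10 statements merged into one kernel-verified Lean document; each statement's English description precedes it below -/
import Mathlib

section
/- For any integers a ≥ 1 and b ≥ 1, the closure of the arithmetic progression {a + bn : n ≥ 0} in the Golomb topology on ℕ⁺ equals the set of positive integers x such that for every prime p dividing b, either p divides x or x ≡ a (mod p^(l_p(b))), where l_p(b) is the exponent of p in b. -/
/-- The base of the Golomb topology: arithmetic progressions `{a + b*n : n ≥ 0}`
with coprime `a, b ≥ 1`, viewed inside the positive integers. -/
def golombBasis : Set (Set ℕ+) :=
  {S | ∃ a b : ℕ, 1 ≤ a ∧ 1 ≤ b ∧ Nat.Coprime a b ∧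
    S = {x : ℕ+ | ∃ n : ℕ, (x : ℕ) = a + b * n}}

/-- The Golomb (relatively prime integer) topology on `ℕ+`. -/
instance golombTopology : TopologicalSpace ℕ+ :=
  TopologicalSpace.generateFrom golombBasis

lemma golomb_isBasis : TopologicalSpace.IsTopologicalBasis golombBasis := by
  refine ⟨?_, ?_, rfl⟩
  · rintro t1 ⟨a1, b1, ha1, hb1, hco1, rfl⟩ t2 ⟨a2, b2, ha2, hb2, hco2, rfl⟩ x ⟨⟨n1, hn1⟩, ⟨n2, hn2⟩⟩
    refine ⟨{y : ℕ+ | ∃ n : ℕ, (y : ℕ) = (x : ℕ) + (b1 * b2) * n},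
      ⟨x, b1 * b2, x.one_le, Nat.one_le_iff_ne_zero.2 (by positivity), ?_, rfl⟩, ⟨0, by ring⟩, ?_⟩
    · have h1 : Nat.Coprime (x : ℕ) b1 := by
        rw [hn1]; exact (Nat.coprime_add_mul_left_left a1 b1 n1).2 hco1
      have h2 : Nat.Coprime (x : ℕ) b2 := by
        rw [hn2]; exact (Nat.coprime_add_mul_left_left a2 b2 n2).2 hco2
      exact h1.mul_right h2
    · rintro y ⟨n, hn⟩
      constructor
      · exact ⟨n1 + b2 * n, by rw [hn, hn1]; ring⟩
      · exact ⟨n2 + b1 * n, by rw [hn, hn2]; ring⟩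
  · rw [Set.sUnion_eq_univ_iff]
    intro x
    exact ⟨{y : ℕ+ | ∃ n : ℕ, (y : ℕ) = (x : ℕ) + 1 * n},
      ⟨x, 1, x.one_le, le_refl 1, Nat.coprime_one_right _, rfl⟩, 0, by ring⟩

theorem golomb_closure_of_progression (a b : ℕ) (ha : 1 ≤ a) (hb : 1 ≤ b) :
    closure {x : ℕ+ | ∃ n : ℕ, (x : ℕ) = a + b * n} =
      {x : ℕ+ | ∀ p : ℕ, p.Prime → p ∣ b →
        p ∣ (x : ℕ) ∨ (x : ℕ) ≡ a [MOD p ^ (b.factorization p)]} := by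
  ext x
  rw [golomb_isBasis.mem_closure_iff]
  constructor
  · intro hx p hp hpb
    by_cases hpx : p ∣ (x : ℕ)
    · exact Or.inl hpx
    right
    set k := b.factorization p with hk
    have hcop : Nat.Coprime (x : ℕ) (p ^ k) :=
      (Nat.coprime_comm.mp (hp.coprime_iff_not_dvd.2 hpx)).pow_right k
    obtain ⟨y, ⟨n, hyn⟩, ⟨m, hym⟩⟩ := hx {y : ℕ+ | ∃ n : ℕ, (y : ℕ) = (x : ℕ) + p ^ k * n}
      ⟨x, p ^ k, x.one_le, Nat.one_le_iff_ne_zero.2 (pow_ne_zero k hp.pos.ne'), hcop, rfl⟩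
      ⟨0, by ring⟩
    have h1 : (x : ℕ) ≡ (y : ℕ) [MOD p ^ k] := by
      rw [hyn]; simp [Nat.ModEq, Nat.add_mul_mod_self_left]
    have h2 : (y : ℕ) ≡ a [MOD p ^ k] := by
      have : (y : ℕ) ≡ a [MOD b] := by
        rw [hym]; simp [Nat.ModEq, Nat.add_mul_mod_self_left]
      exact this.of_dvd (Nat.ordProj_dvd b p)
    exact h1.trans h2
  · rintro hx o ⟨c, d, hc, hd, hcd, rfl⟩ ⟨m, hm⟩
    -- x ≡ c [MOD d], and x is coprime to d
    have hxd : Nat.Coprime (x : ℕ) d := by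
      rw [hm]; exact (Nat.coprime_add_mul_left_left c d m).2 hcd
    -- key congruence: x ≡ a [MOD gcd d b]
    have hmod : (x : ℕ) ≡ a [MOD Nat.gcd d b] := by
      rw [Nat.modEq_iff_dvd]
      rcases eq_or_ne ((a : ℤ) - (x : ℕ)) 0 with h0 | h0
      · rw [h0]; exact dvd_zero _
      have hna : ((a : ℤ) - (x : ℕ)).natAbs ≠ 0 := fun h => h0 (Int.natAbs_eq_zero.mp h)
      have hgd : Nat.gcd d b ∣ ((a : ℤ) - (x : ℕ)).natAbs := by
        rw [← Nat.factorization_le_iff_dvd (Nat.gcd_ne_zero_right (Nat.one_le_iff_ne_zero.mp hb)) hna]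
        intro p
        by_cases hp : p.Prime
        swap
        · simp [Nat.factorization_eq_zero_of_not_prime _ hp]
        rw [Nat.factorization_gcd (Nat.one_le_iff_ne_zero.mp hd) (Nat.one_le_iff_ne_zero.mp hb), Finsupp.inf_apply]
        by_cases hpb : p ∣ b
        swap
        · simp [Nat.factorization_eq_zero_of_not_dvd hpb]
        rcases hx p hp hpb with hpx | hxa
        · have hpd : ¬ p ∣ d := by
            intro hpd
            have h1 : p ∣ 1 := hxd ▸ Nat.dvd_gcd hpx hpd
            exact hp.one_lt.ne' (Nat.eq_one_of_dvd_one h1)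
          simp [Nat.factorization_eq_zero_of_not_dvd hpd]
        · have hdvd : ((p : ℤ)) ^ (b.factorization p) ∣ (a : ℤ) - (x : ℕ) := by
            exact_mod_cast hxa.dvd
          have hdvd2 : p ^ (b.factorization p) ∣ ((a : ℤ) - (x : ℕ)).natAbs := by
            rw [← Int.natCast_dvd_natCast, Int.dvd_natAbs]
            exact_mod_cast hdvd
          have hle := (Nat.Prime.pow_dvd_iff_le_factorization hp hna).mp hdvd2
          exact le_trans (min_le_right _ _) hle
      exact Int.dvd_natAbs.mp (Int.natCast_dvd_natCast.2 hgd)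
    obtain ⟨y0, hy1, hy2⟩ := Nat.chineseRemainder' hmod
    set y : ℕ := y0 + d * b * (a + c + 1) with hy
    have hypos : 0 < y := by positivity
    have hyc : y ≡ c [MOD d] := by
      have h1 : y ≡ y0 [MOD d] := by simp [hy, Nat.ModEq, Nat.mul_assoc, Nat.add_mul_mod_self_left]
      have h2 : (x : ℕ) ≡ c [MOD d] := by
        rw [hm]; simp [Nat.ModEq, Nat.add_mul_mod_self_left]
      exact h1.trans (hy1.trans h2)
    have hya : y ≡ a [MOD b] := by
      have h1 : y ≡ y0 [MOD b] := by
        have : y = y0 + b * (d * (a + c + 1)) := by rw [hy]; ring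
        rw [this]; simp [Nat.ModEq, Nat.add_mul_mod_self_left]
      exact h1.trans hy2
    have hbig : a + c + 1 ≤ d * b * (a + c + 1) := Nat.le_mul_of_pos_left _ (by positivity)
    have hyc' : c ≤ y := by omega
    have hya' : a ≤ y := by omega
    refine ⟨⟨y, hypos⟩, ?_, ?_⟩
    · obtain ⟨n, hn⟩ := (Nat.modEq_iff_dvd' hyc').mp hyc.symm
      exact ⟨n, by simp; omega⟩
    · obtain ⟨n, hn⟩ := (Nat.modEq_iff_dvd' hya').mp hya.symm
      exact ⟨n, by simp; omega⟩
end

section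
/- For integers a₁,…,aₙ and positive integers b₁,…,bₙ, the intersection ⋂ᵢ (aᵢ + bᵢℕ⁺) is nonempty if and only if for all i, j the number aᵢ - aⱼ is divisible by gcd(bᵢ, bⱼ). -/
/-!
Necessity: `gcd(bᵢ, bⱼ)` divides both `x - aᵢ` and `x - aⱼ`. Sufficiency: solve the congruences
`x ≡ aᵢ (mod bᵢ)` one at a time. A solution `x` of the first ones is determined modulo their lcm `L`,
and the next congruence `x' ≡ a (mod b)` is compatible with `x' ≡ x (mod L)` because
`gcd(b, lcm bᵢ)` divides `lcm gcd(b, bᵢ)` (compare prime factorizations). Adding a large multiple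
of `lcm bᵢ` then makes every quotient `(x - aᵢ) / bᵢ` positive.
-/

theorem Nat.gcd_lcm_dvd_lcm_gcd (c m n : ℕ) :
    Nat.gcd c (Nat.lcm m n) ∣ Nat.lcm (Nat.gcd c m) (Nat.gcd c n) := by
  rcases eq_or_ne c 0 with rfl | hc
  · simp
  rcases eq_or_ne m 0 with rfl | hm
  · simp [Nat.lcm_eq_left (Nat.gcd_dvd_left c n)]
  rcases eq_or_ne n 0 with rfl | hn
  · simp [Nat.lcm_eq_right (Nat.gcd_dvd_left c m)]
  have hcm := Nat.gcd_ne_zero_left (n := m) hc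
  have hcn := Nat.gcd_ne_zero_left (n := n) hc
  rw [← Nat.factorization_le_iff_dvd (Nat.gcd_ne_zero_left hc) (Nat.lcm_ne_zero hcm hcn),
    Nat.factorization_gcd hc (Nat.lcm_ne_zero hm hn), Nat.factorization_lcm hm hn,
    Nat.factorization_lcm hcm hcn, Nat.factorization_gcd hc hm, Nat.factorization_gcd hc hn]
  exact fun p ↦ (inf_sup_left _ _ _).le

theorem Nat.gcd_finset_lcm_dvd {ι : Type*} (c : ℕ) (s : Finset ι) (f : ι → ℕ) :
    Nat.gcd c (s.lcm f) ∣ s.lcm fun i ↦ Nat.gcd c (f i) := by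
  classical
  induction s using Finset.induction_on with
  | empty => simp
  | insert j s _ ih =>
    rw [Finset.lcm_insert, Finset.lcm_insert]
    exact (Nat.gcd_lcm_dvd_lcm_gcd c (f j) (s.lcm f)).trans (lcm_dvd_lcm dvd_rfl ih)

theorem Int.exists_dvd_sub_and_dvd_sub {m n : ℕ} {a b : ℤ} (h : (Nat.gcd m n : ℤ) ∣ a - b) :
    ∃ x : ℤ, (m : ℤ) ∣ x - a ∧ (n : ℤ) ∣ x - b := by
  obtain ⟨t, ht⟩ := h
  -- Bézout: `a - b = (m * A + n * B) * t`, so `x := a - m * A * t = b + n * B * t`.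
  refine ⟨a - m * Nat.gcdA m n * t, ⟨-(Nat.gcdA m n * t), by ring⟩, ⟨Nat.gcdB m n * t, ?_⟩⟩
  rw [Nat.gcd_eq_gcd_ab] at ht
  linear_combination ht

theorem Int.exists_forall_dvd_sub {ι : Type*} (s : Finset ι) (a : ι → ℤ) (b : ι → ℕ)
    (h : ∀ i ∈ s, ∀ j ∈ s, (Nat.gcd (b i) (b j) : ℤ) ∣ a i - a j) :
    ∃ x : ℤ, ∀ i ∈ s, (b i : ℤ) ∣ x - a i := by
  classical
  induction s using Finset.induction_on with
  | empty => simp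
  | insert k s _ ih =>
    obtain ⟨x, hx⟩ := ih fun i hi j hj ↦ h i (s.mem_insert_of_mem hi) j (s.mem_insert_of_mem hj)
    have hgcd : ∀ i ∈ s, (Nat.gcd (b k) (b i) : ℤ) ∣ a k - x := fun i hi ↦ by
      have hki := h k (s.mem_insert_self k) i (s.mem_insert_of_mem hi)
      have hxi := (Int.natCast_dvd_natCast.2 (Nat.gcd_dvd_right (b k) (b i))).trans (hx i hi)
      simpa using hki.sub hxi
    have hgcd_lcm : (Nat.gcd (b k) (s.lcm b) : ℤ) ∣ a k - x :=
      Int.natCast_dvd.2 <| (Nat.gcd_finset_lcm_dvd (b k) s b).trans <|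
        Finset.lcm_dvd fun i hi ↦ Int.natCast_dvd.1 (hgcd i hi)
    obtain ⟨z, hzk, hzx⟩ := Int.exists_dvd_sub_and_dvd_sub hgcd_lcm
    refine ⟨z, (Finset.forall_mem_insert _ _ _).2 ⟨hzk, fun i hi ↦ ?_⟩⟩
    have hbi : (b i : ℤ) ∣ z - x :=
      (Int.natCast_dvd_natCast.2 (Finset.dvd_lcm hi)).trans hzx
    simpa using hbi.add (hx i hi)

theorem Int.exists_gt_dvd_sub {L : ℤ} (hL : 0 < L) (x B : ℤ) : ∃ y, L ∣ y - x ∧ B < y := by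
  refine ⟨x + L * (|B - x| + 1), ⟨|B - x| + 1, by ring⟩, ?_⟩
  nlinarith [le_abs_self (B - x), abs_nonneg (B - x)]

theorem Int.exists_nat_eq_add_mul_iff {a b x : ℤ} (hb : 0 < b) :
    (∃ m : ℕ, 1 ≤ m ∧ x = a + b * m) ↔ b ∣ x - a ∧ a < x := by
  constructor
  · rintro ⟨m, hm, rfl⟩
    exact ⟨⟨m, by ring⟩, by nlinarith⟩
  · rintro ⟨⟨q, hq⟩, hax⟩
    have hq0 : 0 < q := by nlinarith
    exact ⟨q.toNat, by omega, by rw [Int.toNat_of_nonneg hq0.le]; linarith⟩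

theorem Int.natCast_gcd_dvd_sub {m n : ℕ} {a b x : ℤ} (ha : (m : ℤ) ∣ x - a)
    (hb : (n : ℤ) ∣ x - b) : (Nat.gcd m n : ℤ) ∣ a - b := by
  have hga := (Int.natCast_dvd_natCast.2 (Nat.gcd_dvd_left m n)).trans ha
  have hgb := (Int.natCast_dvd_natCast.2 (Nat.gcd_dvd_right m n)).trans hb
  simpa using hgb.sub hga

theorem chinese_remainder_progressions (n : ℕ) (a : Fin n → ℤ) (b : Fin n → ℕ)
    (hb : ∀ i, 1 ≤ b i) :
    (⋂ i, {x : ℤ | ∃ m : ℕ, 1 ≤ m ∧ x = a i + (b i : ℤ) * m}).Nonempty ↔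
      ∀ i j, ((Nat.gcd (b i) (b j) : ℤ)) ∣ (a i - a j) := by
  have hb' : ∀ i, (0 : ℤ) < b i := fun i ↦ by exact_mod_cast hb i
  simp only [Set.nonempty_iInter, Int.exists_nat_eq_add_mul_iff (hb' _)]
  constructor
  · rintro ⟨x, hx⟩ i j
    exact Int.natCast_gcd_dvd_sub (hx i).1 (hx j).1
  · intro h
    obtain ⟨x, hx⟩ := Int.exists_forall_dvd_sub Finset.univ a b fun i _ j _ ↦ h i j
    have hL : (0 : ℤ) < Finset.univ.lcm b := by
      simpa [Nat.pos_iff_ne_zero, Finset.lcm_eq_zero_iff] using fun i ↦ (hb' i).ne'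
    obtain ⟨y, hyx, hy⟩ := Int.exists_gt_dvd_sub hL x (∑ i, |a i|)
    refine ⟨y, fun i ↦ ⟨?_, ?_⟩⟩
    · have hbi := (Int.natCast_dvd_natCast.2 (Finset.dvd_lcm (Finset.mem_univ i))).trans hyx
      simpa using hbi.add (hx i (Finset.mem_univ i))
    · calc a i ≤ |a i| := le_abs_self _
        _ ≤ ∑ i, |a i| := Finset.single_le_sum (fun i _ ↦ abs_nonneg (a i)) (Finset.mem_univ i)
        _ < y := hy
end

section
/- The Golomb space ℕ⁺ with the relatively prime integer topology is superconnected: for any nonempty open sets U₁,…,Uₙ, the intersection of their closures is nonempty. -/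
def Superconnected (X : Type*) [TopologicalSpace X] : Prop :=
  ∀ (n : ℕ) (U : Fin n → Set X), (∀ i, IsOpen (U i)) → (∀ i, (U i).Nonempty) →
    (⋂ i, closure (U i)).Nonempty

theorem Nat.exists_ge_modEq_and_modEq {b d : ℕ} (hbd : b.Coprime d) (hb : 0 < b) (hd : 0 < d)
    (a c N : ℕ) : ∃ y, N ≤ y ∧ y ≡ a [MOD b] ∧ y ≡ c [MOD d] := by
  obtain ⟨z, hza, hzc⟩ := Nat.chineseRemainder hbd a c
  refine ⟨z + b * d * N, ?_, ?_, ?_⟩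
  · nlinarith [Nat.mul_pos hb hd]
  · refine Nat.ModEq.trans ?_ hza
    simp [Nat.ModEq, mul_assoc]
  · refine Nat.ModEq.trans ?_ hzc
    simp [Nat.ModEq, mul_comm b d, mul_assoc]

namespace Golomb

def progression (a b : ℕ) : Set ℕ+ :=
  {x | ∃ n : ℕ, (x : ℕ) = a + b * n}

theorem mem_golombBasis_iff {S : Set ℕ+} :
    S ∈ golombBasis ↔ ∃ a b : ℕ, 1 ≤ a ∧ 1 ≤ b ∧ a.Coprime b ∧ S = progression a b :=
  Iff.rfl

theorem mem_progression_iff {a b : ℕ} {x : ℕ+} :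
    x ∈ progression a b ↔ a ≤ x ∧ (x : ℕ) ≡ a [MOD b] := by
  constructor
  · rintro ⟨n, hn⟩
    refine ⟨hn ▸ Nat.le_add_right a (b * n), ?_⟩
    exact ((Nat.modEq_iff_dvd' (hn ▸ Nat.le_add_right a (b * n))).2 ⟨n, by omega⟩).symm
  · rintro ⟨hax, hmod⟩
    obtain ⟨n, hn⟩ := (Nat.modEq_iff_dvd' hax).1 hmod.symm
    exact ⟨n, by omega⟩

theorem progression_subset_of_mem {a b : ℕ} {x : ℕ+} (hx : x ∈ progression a b) :
    progression x b ⊆ progression a b := by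
  rw [mem_progression_iff] at hx
  intro y hy
  rw [mem_progression_iff] at hy ⊢
  exact ⟨hx.1.trans hy.1, hy.2.trans hx.2⟩

theorem coprime_of_mem_progression {a b : ℕ} (hab : a.Coprime b) {x : ℕ+}
    (hx : x ∈ progression a b) : (x : ℕ).Coprime b :=
  (Nat.ModEq.gcd_eq (mem_progression_iff.1 hx).2).trans hab

theorem self_mem_progression (x : ℕ+) (b : ℕ) : x ∈ progression x b :=
  ⟨0, by ring⟩

/-- Re-centred at a common point `x`, the progression `x + b₁b₂ℕ` is basic since `x` is
coprime to both differences. -/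
theorem isTopologicalBasis : TopologicalSpace.IsTopologicalBasis golombBasis where
  exists_subset_inter := by
    simp only [mem_golombBasis_iff]
    rintro _ ⟨a₁, b₁, -, hb₁, hab₁, rfl⟩ _ ⟨a₂, b₂, -, hb₂, hab₂, rfl⟩ x ⟨hx₁, hx₂⟩
    refine ⟨progression x (b₁ * b₂),
      ⟨x, b₁ * b₂, x.pos, Nat.mul_pos hb₁ hb₂,
        (coprime_of_mem_progression hab₁ hx₁).mul_right (coprime_of_mem_progression hab₂ hx₂),
        rfl⟩,
      self_mem_progression x _, fun y hy => ?_⟩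
    rw [mem_progression_iff] at hy
    exact ⟨progression_subset_of_mem hx₁ (mem_progression_iff.2 ⟨hy.1, hy.2.of_mul_right b₂⟩),
      progression_subset_of_mem hx₂ (mem_progression_iff.2 ⟨hy.1, hy.2.of_mul_left b₁⟩)⟩
  sUnion_eq := Set.eq_univ_of_forall fun x =>
    ⟨progression 1 1, ⟨1, 1, le_rfl, le_rfl, Nat.coprime_one_left 1, rfl⟩,
      mem_progression_iff.2 ⟨x.pos, Nat.modEq_one⟩⟩
  eq_generateFrom := rfl

theorem mem_closure_progression {a b : ℕ} {x : ℕ+} (hbx : b ∣ x) :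
    x ∈ closure (progression a b) := by
  rw [isTopologicalBasis.mem_closure_iff]
  rintro _ ⟨c, d, hc, hd, hcd, rfl⟩ hx
  have hb : 0 < b := Nat.pos_of_dvd_of_pos hbx x.pos
  have hbd : b.Coprime d := Nat.Coprime.coprime_dvd_left hbx (coprime_of_mem_progression hcd hx)
  obtain ⟨y, hy, hyb, hyd⟩ := Nat.exists_ge_modEq_and_modEq hbd hb hd a c (a + c)
  exact ⟨⟨y, by omega⟩, mem_progression_iff.2 ⟨(by omega : c ≤ y), hyd⟩,
    mem_progression_iff.2 ⟨(by omega : a ≤ y), hyb⟩⟩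

theorem exists_progression_subset {U : Set ℕ+} (hU : IsOpen U) (hne : U.Nonempty) :
    ∃ a b : ℕ, 0 < b ∧ progression a b ⊆ U := by
  obtain ⟨x, hx⟩ := hne
  obtain ⟨_, ⟨a, b, -, hb, -, rfl⟩, -, hsub⟩ := isTopologicalBasis.exists_subset_of_mem_open hx hU
  exact ⟨a, b, hb, hsub⟩

end Golomb

theorem golomb_superconnected : Superconnected ℕ+ := by
  intro n U hopen hne
  choose a b hb hsub using fun i => Golomb.exists_progression_subset (hopen i) (hne i)
  refine ⟨⟨∏ i, b i, Finset.prod_pos fun i _ => hb i⟩, Set.mem_iInter.2 fun i => ?_⟩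
  exact closure_mono (hsub i)
    (Golomb.mem_closure_progression (Finset.dvd_prod_of_mem b (Finset.mem_univ i)))
end

section
/- The set Π of prime numbers is dense in the Golomb space and the subspace topology on Π is regular (hence metrizable), and Π with the subspace topology is homeomorphic to the rational numbers ℚ. -/
open TopologicalSpace

/-- Residue class as a subset of `ℕ+`. -/
def cls (r m : ℕ) : Set ℕ+ := {x : ℕ+ | (x : ℕ) % m = r % m}

lemma mem_cls {r m : ℕ} {x : ℕ+} : x ∈ cls r m ↔ (x : ℕ) % m = r % m := Iff.rfl

lemma self_mem_cls {r : ℕ} {m : ℕ} {x : ℕ+} (h : (x : ℕ) = r) : x ∈ cls r m := by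
  simp [mem_cls, h]

lemma cls_eq_of_mem {r m : ℕ} {x : ℕ+} (h : x ∈ cls r m) : cls (x : ℕ) m = cls r m := by
  ext z
  simp only [mem_cls] at *
  rw [h]

lemma cls_subset_cls {r m M : ℕ} (h : m ∣ M) : cls r M ⊆ cls r m := by
  intro z hz
  have hz' : (z : ℕ) % M = r % M := hz
  show (z : ℕ) % m = r % m
  calc (z : ℕ) % m = (z : ℕ) % M % m := (Nat.mod_mod_of_dvd _ h).symm
  _ = r % M % m := by rw [hz']
  _ = r % m := Nat.mod_mod_of_dvd _ h

lemma coprime_of_mem_cls {r m : ℕ} {x : ℕ+} (hco : Nat.Coprime r m) (h : x ∈ cls r m) :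
    Nat.Coprime (x : ℕ) m := by
  have h1 : Nat.gcd m (x : ℕ) = Nat.gcd m r := by
    rw [Nat.gcd_rec m (x : ℕ), Nat.gcd_rec m r, mem_cls.mp h]
  show Nat.gcd (x : ℕ) m = 1
  rw [Nat.gcd_comm, h1, Nat.gcd_comm]
  exact hco

lemma cls_mem_golombBasis {r m : ℕ} (hm : 1 ≤ m) (hco : Nat.Coprime r m) :
    cls r m ∈ golombBasis := by
  rcases eq_or_lt_of_le hm with h1 | h2
  · -- m = 1
    refine ⟨1, 1, le_refl _, le_refl _, Nat.coprime_one_left _, ?_⟩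
    ext x
    simp only [cls, Set.mem_setOf_eq, ← h1, Nat.mod_one]
    constructor
    · intro _
      exact ⟨(x : ℕ) - 1, by have := x.pos; omega⟩
    · intro _; trivial
  · -- m ≥ 2
    have hr : r % m ≠ 0 := by
      intro h0
      have : m ∣ r := Nat.dvd_of_mod_eq_zero h0
      have : Nat.gcd r m = m := Nat.gcd_eq_right this
      rw [hco] at this
      omega
    refine ⟨r % m, m, by omega, by omega, ?_, ?_⟩
    · show Nat.gcd (r % m) m = 1
      rw [← Nat.gcd_rec m r, Nat.gcd_comm]
      exact hco
    · ext x
      simp only [cls, Set.mem_setOf_eq]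
      constructor
      · intro hx
        refine ⟨(x : ℕ) / m, ?_⟩
        have h3 := Nat.div_add_mod (x : ℕ) m
        have h4 : r % m % m = r % m := Nat.mod_mod_of_dvd r dvd_rfl
        omega
      · rintro ⟨n, hn⟩
        rw [hn, Nat.add_mul_mod_self_left, Nat.mod_mod_of_dvd r dvd_rfl]

lemma isOpen_cls {r m : ℕ} (hm : 1 ≤ m) (hco : Nat.Coprime r m) : IsOpen (cls r m) :=
  TopologicalSpace.GenerateOpen.basic _ (cls_mem_golombBasis hm hco)

/-- Inside any Golomb-open set, around any point, there is a coprime residue class. -/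
lemma exists_cls_subset {u : Set ℕ+} (hu : TopologicalSpace.GenerateOpen golombBasis u) :
    ∀ a ∈ u, ∃ r m : ℕ, 1 ≤ m ∧ Nat.Coprime r m ∧ a ∈ cls r m ∧ cls r m ⊆ u := by
  induction hu with
  | basic s hs =>
    obtain ⟨a0, b, ha0, hb, hco, rfl⟩ := hs
    rintro a ⟨n0, hn0⟩
    obtain ⟨p, hpge, hp⟩ := Nat.exists_infinite_primes ((a : ℕ) + 1)
    refine ⟨(a : ℕ), b * p, Nat.mul_pos (by omega) hp.pos, ?_, self_mem_cls rfl, ?_⟩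
    · have h1 : Nat.Coprime (a : ℕ) b := by
        rw [hn0]
        exact (Nat.coprime_add_mul_left_left a0 b n0).mpr hco
      have h2 : Nat.Coprime (a : ℕ) p := by
        rw [Nat.coprime_comm]
        refine (Nat.Prime.coprime_iff_not_dvd hp).mpr (fun hdvd => ?_)
        have := Nat.le_of_dvd a.pos hdvd
        omega
      exact Nat.Coprime.mul_right h1 h2
    · intro z hz
      simp only [mem_cls] at hz
      have hlt : (a : ℕ) < b * p := by
        calc (a : ℕ) < (a : ℕ) + 1 := by omega
        _ ≤ p := hpge
        _ ≤ b * p := Nat.le_mul_of_pos_left p hb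
      rw [Nat.mod_eq_of_lt hlt] at hz
      have h3 := Nat.div_add_mod (z : ℕ) (b * p)
      refine ⟨n0 + p * ((z : ℕ) / (b * p)), ?_⟩
      have hzeq : (z : ℕ) = b * p * ((z : ℕ) / (b * p)) + (a : ℕ) := by omega
      generalize hgen : (z : ℕ) / (b * p) = k at hzeq ⊢
      rw [hzeq, hn0]
      ring
  | univ =>
    intro a _
    refine ⟨1, 1, le_refl _, Nat.coprime_one_left _, by simp [mem_cls, Nat.mod_one], fun z _ => trivial⟩
  | inter u v _ _ ihu ihv =>
    rintro a ⟨hau, hav⟩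
    obtain ⟨r1, m1, hm1, hc1, ha1, hs1⟩ := ihu a hau
    obtain ⟨r2, m2, hm2, hc2, ha2, hs2⟩ := ihv a hav
    have hca1 : Nat.Coprime (a : ℕ) m1 := coprime_of_mem_cls hc1 ha1
    have hca2 : Nat.Coprime (a : ℕ) m2 := coprime_of_mem_cls hc2 ha2
    refine ⟨(a : ℕ), m1 * m2, Nat.mul_pos (by omega) (by omega), Nat.Coprime.mul_right hca1 hca2,
      self_mem_cls rfl, ?_⟩
    intro z hz
    constructor
    · exact hs1 (by rw [← cls_eq_of_mem ha1]; exact cls_subset_cls (dvd_mul_right m1 m2) hz)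
    · exact hs2 (by rw [← cls_eq_of_mem ha2]; exact cls_subset_cls (dvd_mul_left m2 m1) hz)
  | sUnion S _ ih =>
    rintro a ⟨t, htS, hat⟩
    obtain ⟨r, m, hm, hc, ha, hs⟩ := ih t htS a hat
    exact ⟨r, m, hm, hc, ha, hs.trans (Set.subset_sUnion_of_mem htS)⟩

/-- The coprime residue classes form a topological basis of the Golomb topology. -/
theorem isBasis_cls :
    IsTopologicalBasis {S : Set ℕ+ | ∃ r m : ℕ, 1 ≤ m ∧ Nat.Coprime r m ∧ S = cls r m} := by
  apply isTopologicalBasis_of_isOpen_of_nhds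
  · rintro u ⟨r, m, hm, hco, rfl⟩
    exact isOpen_cls hm hco
  · intro a u hau hu
    obtain ⟨r, m, hm, hc, ha, hs⟩ := exists_cls_subset hu a hau
    exact ⟨cls r m, ⟨r, m, hm, hc, rfl⟩, ha, hs⟩

/-- Dirichlet: each coprime class contains a prime bigger than any given bound. -/
lemma exists_prime_in_cls {r m : ℕ} (hm : 1 ≤ m) (hco : Nat.Coprime r m) (N : ℕ) :
    ∃ p : ℕ, N < p ∧ p.Prime ∧ p % m = r % m := by
  haveI : NeZero m := ⟨by omega⟩
  have hunit : IsUnit ((r : ZMod m)) := (ZMod.isUnit_iff_coprime r m).mpr hco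
  obtain ⟨p, hpN, hpp, hpmod⟩ := Nat.forall_exists_prime_gt_and_eq_mod hunit N
  exact ⟨p, hpN, hpp, (ZMod.natCast_eq_natCast_iff p r m).mp hpmod⟩

theorem dense_primes : Dense {p : ℕ+ | (p : ℕ).Prime} := by
  rw [isBasis_cls.dense_iff]
  rintro o ⟨r, m, hm, hco, rfl⟩ _
  obtain ⟨p, hp0, hpp, hpm⟩ := exists_prime_in_cls hm hco 0
  exact ⟨⟨p, by omega⟩, hpm, hpp⟩
lemma ordCompl_eq_self_of_not_dvd {q n : ℕ} (h : ¬ q ∣ n) : ordCompl[q] n = n := by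
  rw [Nat.factorization_eq_zero_of_not_dvd h, pow_zero, Nat.div_one]

lemma ordCompl_self_of_prime {q : ℕ} (hq : q.Prime) : ordCompl[q] q = 1 := by
  rw [Nat.Prime.factorization_self hq, pow_one, Nat.div_self hq.pos]

/-- A "good pair" : a coprime residue class whose trace on the primes is clopen. -/
def GoodPair (r M : ℕ) : Prop :=
  1 ≤ M ∧ Nat.Coprime r M ∧
    ∀ q : ℕ, q.Prime → q ∣ M → ¬ (q % (ordCompl[q] M) = r % (ordCompl[q] M))

lemma clopen_good {r M : ℕ} (h : GoodPair r M) :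
    IsClopen (Subtype.val ⁻¹' cls r M : Set ↥{p : ℕ+ | (p : ℕ).Prime}) := by
  obtain ⟨hM, hco, hgood⟩ := h
  constructor
  · -- closed
    rw [← isOpen_compl_iff, isOpen_iff_forall_mem_open]
    rintro ⟨q, hq⟩ hmem
    simp only [Set.mem_compl_iff, Set.mem_preimage] at hmem
    by_cases hdvd : ((q : ℕ+) : ℕ) ∣ M
    · have hq' : ((q : ℕ+) : ℕ).Prime := hq
      have hc0 : 0 < ordCompl[((q : ℕ+) : ℕ)] M := Nat.ordCompl_pos _ (by omega)
      refine ⟨Subtype.val ⁻¹' cls ((q : ℕ+) : ℕ) (ordCompl[((q : ℕ+) : ℕ)] M), ?_, ?_, ?_⟩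
      · rintro ⟨z, hz⟩ hzmem
        simp only [Set.mem_preimage, mem_cls] at hzmem
        simp only [Set.mem_compl_iff, Set.mem_preimage]
        intro hzr
        have h1 : ((z : ℕ+) : ℕ) % ordCompl[((q : ℕ+) : ℕ)] M
            = r % ordCompl[((q : ℕ+) : ℕ)] M :=
          cls_subset_cls (Nat.ordCompl_dvd M _) hzr
        exact hgood _ hq' hdvd (by omega)
      · exact (isOpen_cls hc0 (Nat.coprime_ordCompl hq' (by omega))).preimage
          continuous_subtype_val
      · exact self_mem_cls rfl
    · refine ⟨Subtype.val ⁻¹' cls ((q : ℕ+) : ℕ) M, ?_, ?_, ?_⟩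
      · rintro ⟨z, hz⟩ hzmem
        simp only [Set.mem_preimage, mem_cls] at hzmem
        simp only [Set.mem_compl_iff, Set.mem_preimage]
        intro hzr
        exact hmem (show _ % M = r % M by rw [← hzmem]; exact hzr)
      · exact (isOpen_cls hM ((Nat.Prime.coprime_iff_not_dvd hq).mpr hdvd)).preimage
          continuous_subtype_val
      · exact self_mem_cls rfl
  · exact (isOpen_cls hM hco).preimage continuous_subtype_val

/-- The key number-theoretic construction: good pairs refine any coprime class at a prime. -/
lemma exists_goodpair {p m : ℕ} (hp : p.Prime) (hm : 1 ≤ m) (hco : Nat.Coprime p m) :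
    ∃ M, GoodPair p M ∧ m ∣ M := by
  set u : ℕ := if p = 2 then 3 else 2 with hu_def
  have hu : u.Prime := by
    rw [hu_def]; split <;> norm_num
  have hup : u ≠ p := by
    rw [hu_def]; split
    · omega
    · omega
  have hu2 : 2 ≤ u := hu.two_le
  have hmu2 : 2 ≤ m * u := le_trans hu2 (Nat.le_mul_of_pos_left u (by omega))
  obtain ⟨s, hsge, hsp⟩ := Nat.exists_infinite_primes (m * u + p + 1)
  obtain ⟨t, htp, hts, ht2s⟩ := Nat.exists_prime_lt_and_le_two_mul s (by omega)
  have hp2 := hp.two_le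
  have ht2s' : t < 2 * s := by
    rcases Nat.lt_or_ge t (2 * s) with h | h
    · exact h
    · exfalso
      have heq : t = 2 * s := by omega
      have h2t : (2 : ℕ) ∣ t := ⟨s, heq⟩
      rcases (Nat.Prime.eq_one_or_self_of_dvd htp 2 h2t) with h1 | h1 <;> omega
  have hmus : m * u < s := by omega
  have hps : p < s := by omega
  have hMpos : 0 < m * u * s * t :=
    Nat.mul_pos (Nat.mul_pos (Nat.mul_pos (by omega) (by omega)) hsp.pos) htp.pos
  refine ⟨m * u * s * t, ⟨hMpos, ?_, ?_⟩, ⟨u * s * t, by ring⟩⟩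
  · -- coprimality
    have c1 : Nat.Coprime p u := (Nat.coprime_primes hp hu).mpr (Ne.symm hup)
    have c2 : Nat.Coprime p s := (Nat.coprime_primes hp hsp).mpr (by omega)
    have c3 : Nat.Coprime p t := (Nat.coprime_primes hp htp).mpr (by omega)
    exact ((hco.mul_right c1).mul_right c2).mul_right c3
  · -- goodness
    intro q hq hqdvd
    have hq2 := hq.two_le
    have hcomp : ordCompl[q] (m * u * s * t)
        = ordCompl[q] (m * u) * ordCompl[q] s * ordCompl[q] t := by
      rw [Nat.ordCompl_mul, Nat.ordCompl_mul]
    -- in every case, q < ordCompl and p < ordCompl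
    have hkey : q < ordCompl[q] (m * u * s * t) ∧ p < ordCompl[q] (m * u * s * t) := by
      by_cases hqt : q = t
      · have h1 : ordCompl[q] t = 1 := by rw [hqt]; exact ordCompl_self_of_prime htp
        have h2 : ordCompl[q] s = s := ordCompl_eq_self_of_not_dvd (fun hd => by
          rcases (hsp.eq_one_or_self_of_dvd q hd) with h | h <;> omega)
        have h3 : ordCompl[q] (m * u) = m * u := ordCompl_eq_self_of_not_dvd (fun hd => by
          have := Nat.le_of_dvd (by omega) hd; omega)
        have hcval : ordCompl[q] (m * u * s * t) = m * u * s := by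
          rw [hcomp, h1, h2, h3, mul_one]
        have h2s : 2 * s ≤ m * u * s := Nat.mul_le_mul_right s hmu2
        omega
      · by_cases hqs : q = s
        · have h1 : ordCompl[q] s = 1 := by rw [hqs]; exact ordCompl_self_of_prime hsp
          have h2 : ordCompl[q] t = t := ordCompl_eq_self_of_not_dvd (fun hd => by
            rcases (htp.eq_one_or_self_of_dvd q hd) with h | h <;> omega)
          have h3 : ordCompl[q] (m * u) = m * u := ordCompl_eq_self_of_not_dvd (fun hd => by
            have := Nat.le_of_dvd (by omega) hd; omega)
          have hcval : ordCompl[q] (m * u * s * t) = m * u * t := by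
            rw [hcomp, h1, h2, h3, mul_one]
          have h2t : 2 * t ≤ m * u * t := Nat.mul_le_mul_right t hmu2
          omega
        · -- q ∣ m * u
          have h2 : ordCompl[q] s = s := ordCompl_eq_self_of_not_dvd (fun hd => by
            rcases (hsp.eq_one_or_self_of_dvd q hd) with h | h
            · omega
            · exact hqs h)
          have h3 : ordCompl[q] t = t := ordCompl_eq_self_of_not_dvd (fun hd => by
            rcases (htp.eq_one_or_self_of_dvd q hd) with h | h
            · omega
            · exact hqt h)
          have hqmu : q ∣ m * u := by
            rcases (Nat.Prime.dvd_mul hq).mp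
              (show q ∣ (m * u * s) * t from hqdvd) with h | h
            · rcases (Nat.Prime.dvd_mul hq).mp h with h' | h'
              · exact h'
              · exact absurd ((hsp.eq_one_or_self_of_dvd q h').resolve_left (by omega)) hqs
            · exact absurd ((htp.eq_one_or_self_of_dvd q h).resolve_left (by omega)) hqt
          have hqle : q ≤ m * u := Nat.le_of_dvd (by omega) hqmu
          have hpos : 0 < ordCompl[q] (m * u) := Nat.ordCompl_pos q (by omega)
          have hst : s * t ≤ ordCompl[q] (m * u * s * t) := by
            rw [hcomp, h2, h3]
            calc s * t = 1 * (s * t) := (one_mul _).symm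
            _ ≤ ordCompl[q] (m * u) * (s * t) := Nat.mul_le_mul_right _ hpos
            _ = ordCompl[q] (m * u) * s * t := by ring
          have hs_le : s ≤ s * t := Nat.le_mul_of_pos_right s htp.pos
          omega
    intro habs
    rw [Nat.mod_eq_of_lt hkey.1, Nat.mod_eq_of_lt hkey.2] at habs
    subst habs
    -- q = p divides M, contradicting coprimality
    have hcoM : Nat.Coprime q (m * u * s * t) := by
      have c1 : Nat.Coprime q u := (Nat.coprime_primes hq hu).mpr (Ne.symm hup)
      have c2 : Nat.Coprime q s := (Nat.coprime_primes hq hsp).mpr (by omega)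
      have c3 : Nat.Coprime q t := (Nat.coprime_primes hq htp).mpr (by omega)
      exact ((hco.mul_right c1).mul_right c2).mul_right c3
    have hd : q ∣ Nat.gcd q (m * u * s * t) := Nat.dvd_gcd dvd_rfl hqdvd
    rw [hcoM] at hd
    have := Nat.le_of_dvd (by omega) hd
    omega

/-- Around every point of the prime subspace, inside every open set, there is a clopen
good class. -/
lemma exists_good_nhd (x : ↥{p : ℕ+ | (p : ℕ).Prime}) (U : Set ↥{p : ℕ+ | (p : ℕ).Prime})
    (hxU : x ∈ U) (hU : IsOpen U) :
    ∃ r M : ℕ, GoodPair r M ∧ x ∈ Subtype.val ⁻¹' cls r M ∧ Subtype.val ⁻¹' cls r M ⊆ U := by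
  obtain ⟨u, hu, rfl⟩ := isOpen_induced_iff.mp hU
  have hxu : ((x : ℕ+) : ℕ+) ∈ u := hxU
  obtain ⟨v, ⟨r, m, hm, hcor, rfl⟩, hxv, hvu⟩ := isBasis_cls.exists_subset_of_mem_open hxU hu
  have hpx : ((x : ℕ+) : ℕ).Prime := x.2
  have hcopm : Nat.Coprime ((x : ℕ+) : ℕ) m := coprime_of_mem_cls hcor hxv
  obtain ⟨M, hgood, hdvd⟩ := exists_goodpair hpx hm hcopm
  refine ⟨((x : ℕ+) : ℕ), M, hgood, self_mem_cls rfl, ?_⟩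
  intro z hz
  apply hvu
  rw [← cls_eq_of_mem hxv]
  exact cls_subset_cls hdvd hz

lemma t1_primes : T1Space ↥{p : ℕ+ | (p : ℕ).Prime} := by
  rw [t1Space_iff_exists_open]
  rintro x y hxy
  have hpq : ((x : ℕ+) : ℕ) ≠ ((y : ℕ+) : ℕ) := by
    intro h
    exact hxy (Subtype.ext (PNat.coe_injective h))
  obtain ⟨c, hcge, hcp⟩ := Nat.exists_infinite_primes (((x : ℕ+) : ℕ) + ((y : ℕ+) : ℕ) + 1)
  have hpc : Nat.Coprime ((x : ℕ+) : ℕ) c := (Nat.coprime_primes x.2 hcp).mpr (by omega)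
  refine ⟨Subtype.val ⁻¹' cls ((x : ℕ+) : ℕ) c,
    (isOpen_cls hcp.pos hpc).preimage continuous_subtype_val, self_mem_cls rfl, ?_⟩
  simp only [Set.mem_preimage, mem_cls]
  have h1 : ((y : ℕ+) : ℕ) % c = ((y : ℕ+) : ℕ) := Nat.mod_eq_of_lt (by omega)
  have h2 : ((x : ℕ+) : ℕ) % c = ((x : ℕ+) : ℕ) := Nat.mod_eq_of_lt (by omega)
  omega

open Topology in
lemma nebot_primes (x : ↥{p : ℕ+ | (p : ℕ).Prime}) : Filter.NeBot (𝓝[≠] x) := by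
  rw [← mem_closure_iff_nhdsWithin_neBot]
  rw [mem_closure_iff]
  intro O hO hxO
  obtain ⟨r, M, hgood, hxr, hrO⟩ := exists_good_nhd x O hxO hO
  obtain ⟨pn, hgt, hpn, hmod⟩ := exists_prime_in_cls hgood.1 hgood.2.1 ((x : ℕ+) : ℕ)
  have hxmod : ((x : ℕ+) : ℕ) % M = r % M := hxr
  refine ⟨⟨⟨pn, by omega⟩, hpn⟩, hrO (show pn % M = r % M from hmod), ?_⟩
  simp only [Set.mem_compl_iff, Set.mem_singleton_iff]
  intro h
  have : pn = ((x : ℕ+) : ℕ) := congrArg (fun z : ↥{p : ℕ+ | (p : ℕ).Prime} => ((z : ℕ+) : ℕ)) h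
  omega

lemma regular_primes : RegularSpace ↥{p : ℕ+ | (p : ℕ).Prime} := by
  apply RegularSpace.of_exists_mem_nhds_isClosed_subset
  intro x s hs
  rw [mem_nhds_iff] at hs
  obtain ⟨U, hUs, hUo, hxU⟩ := hs
  obtain ⟨r, M, hgood, hxr, hrU⟩ := exists_good_nhd x U hxU hUo
  exact ⟨Subtype.val ⁻¹' cls r M, (clopen_good hgood).isOpen.mem_nhds hxr,
    (clopen_good hgood).isClosed, hrU.trans hUs⟩

open scoped Classical in
/-- A countable family of clopen sets forming a basis of the prime subspace. -/
noncomputable def famB : ℕ → Set ↥{p : ℕ+ | (p : ℕ).Prime} := fun n =>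
  if GoodPair n.unpair.1 n.unpair.2 then Subtype.val ⁻¹' cls n.unpair.1 n.unpair.2 else ∅

lemma famB_clopen (n : ℕ) : IsClopen (famB n) := by
  rw [famB]
  split
  · exact clopen_good (by assumption)
  · exact isClopen_empty

lemma famB_basis (x : ↥{p : ℕ+ | (p : ℕ).Prime}) (U : Set ↥{p : ℕ+ | (p : ℕ).Prime})
    (hxU : x ∈ U) (hU : IsOpen U) : ∃ n, x ∈ famB n ∧ famB n ⊆ U := by
  obtain ⟨r, M, hgood, hxr, hrU⟩ := exists_good_nhd x U hxU hU
  refine ⟨Nat.pair r M, ?_, ?_⟩ <;> rw [famB, Nat.unpair_pair, if_pos hgood]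
  · exact hxr
  · exact hrU

/-! ### Generic: a countable T1 space with a countable clopen basis and no isolated
points admits a linear order making it a countable dense order whose order topology is
the given topology; hence it is homeomorphic to `ℚ`. -/

open Topology Filter

/-- Data: a countable clopen basis on a space without isolated points, together with an
enumeration of the (countable) space. -/
structure CB (X : Type) [TopologicalSpace X] : Type where
  e : ℕ → X
  surj : Function.Surjective e
  B : ℕ → Set X
  clopen : ∀ n, IsClopen (B n)
  basis : ∀ (x : X) (U : Set X), x ∈ U → IsOpen U → ∃ n, x ∈ B n ∧ B n ⊆ U
  ni : ∀ x : X, Filter.NeBot (𝓝[≠] x)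

namespace CB

variable {X : Type} [TopologicalSpace X] [T1Space X] (D : CB X)
include D

lemma infinite' {C : Set X} (hC : IsOpen C) (hne : C.Nonempty) : C.Infinite := by
  obtain ⟨x, hx⟩ := hne
  haveI := D.ni x
  exact infinite_of_mem_nhds x (hC.mem_nhds hx)

lemma peel {C : Set X} (hC : IsClopen C) (hne : C.Nonempty) (tgt : X) (htgt : tgt ∈ C) :
    ∃ V : Set X, IsClopen V ∧ V ⊆ C ∧ tgt ∈ V ∧ (C \ V).Nonempty := by
  obtain ⟨y, hy⟩ := ((D.infinite' hC.isOpen hne).diff (Set.finite_singleton tgt)).nonempty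
  have hopen : IsOpen (C \ {y}) := hC.isOpen.sdiff isClosed_singleton
  have htgt' : tgt ∈ C \ {y} := by
    refine ⟨htgt, fun h => hy.2 ?_⟩
    simp only [Set.mem_singleton_iff] at h ⊢
    exact h.symm
  obtain ⟨n, htn, hsub⟩ := D.basis tgt _ htgt' hopen
  exact ⟨D.B n, D.clopen n, hsub.trans Set.diff_subset, htn,
    ⟨y, hy.1, fun hv => (hsub hv).2 rfl⟩⟩

/-- Index of the first enumerated element of a nonempty set. -/
noncomputable def fidx (C : Set X) : ℕ := sInf {i | D.e i ∈ C}

lemma fidx_mem (C : Set X) (h : C.Nonempty) : D.e (D.fidx C) ∈ C := by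
  have hne : {i | D.e i ∈ C}.Nonempty := by
    obtain ⟨x, hx⟩ := h
    obtain ⟨i, rfl⟩ := D.surj x
    exact ⟨i, hx⟩
  exact Nat.sInf_mem hne

lemma fidx_min (C : Set X) {j : ℕ} (hj : D.e j ∈ C) : D.fidx C ≤ j := Nat.sInf_le hj

open Classical in
/-- Peel a clopen piece containing the first enumerated point off a clopen set. -/
noncomputable def step (C : Set X) : Set X :=
  if h : IsClopen C ∧ C.Nonempty then
    (D.peel h.1 h.2 (D.e (D.fidx C)) (D.fidx_mem C h.2)).choose
  else ∅

lemma step_spec {C : Set X} (h1 : IsClopen C) (h2 : C.Nonempty) :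
    IsClopen (D.step C) ∧ D.step C ⊆ C ∧ D.e (D.fidx C) ∈ D.step C ∧
      (C \ D.step C).Nonempty := by
  rw [step, dif_pos (⟨h1, h2⟩ : IsClopen C ∧ C.Nonempty)]
  exact (D.peel h1 h2 (D.e (D.fidx C)) (D.fidx_mem C h2)).choose_spec

/-- Iterated remainders. -/
noncomputable def rest (C : Set X) : ℕ → Set X
  | 0 => C
  | k+1 => rest C k \ D.step (rest C k)

/-- The `ω`-indexed clopen pieces of a clopen set. -/
noncomputable def pieces (C : Set X) (k : ℕ) : Set X := D.step (D.rest C k)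

variable {C : Set X}

lemma rest_good (h1 : IsClopen C) (h2 : C.Nonempty) :
    ∀ k, IsClopen (D.rest C k) ∧ (D.rest C k).Nonempty := by
  intro k
  induction k with
  | zero => exact ⟨h1, h2⟩
  | succ k ih =>
    obtain ⟨hc, hne⟩ := ih
    obtain ⟨hsc, _, _, hrest⟩ := D.step_spec hc hne
    exact ⟨hc.diff hsc, hrest⟩

lemma rest_subset (h1 : IsClopen C) (h2 : C.Nonempty) : ∀ k, D.rest C k ⊆ C := by
  intro k
  induction k with
  | zero => exact subset_rfl
  | succ k ih => exact Set.diff_subset.trans ih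

lemma rest_mono (h1 : IsClopen C) (h2 : C.Nonempty) {j k : ℕ} (h : j ≤ k) :
    D.rest C k ⊆ D.rest C j := by
  induction k with
  | zero =>
    have hj : j = 0 := by omega
    subst hj; exact subset_rfl
  | succ k ih =>
    rcases Nat.lt_or_ge j (k+1) with hlt | hge
    · exact Set.diff_subset.trans (ih (by omega))
    · have hj : j = k + 1 := by omega
      subst hj; exact subset_rfl

lemma pieces_clopen (h1 : IsClopen C) (h2 : C.Nonempty) (k : ℕ) : IsClopen (D.pieces C k) :=
  (D.step_spec (D.rest_good h1 h2 k).1 (D.rest_good h1 h2 k).2).1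

lemma pieces_nonempty (h1 : IsClopen C) (h2 : C.Nonempty) (k : ℕ) : (D.pieces C k).Nonempty :=
  ⟨_, (D.step_spec (D.rest_good h1 h2 k).1 (D.rest_good h1 h2 k).2).2.2.1⟩

lemma pieces_subset (h1 : IsClopen C) (h2 : C.Nonempty) (k : ℕ) : D.pieces C k ⊆ C :=
  ((D.step_spec (D.rest_good h1 h2 k).1 (D.rest_good h1 h2 k).2).2.1).trans
    (D.rest_subset h1 h2 k)

lemma pieces_disjoint (h1 : IsClopen C) (h2 : C.Nonempty) {j k : ℕ} (h : j ≠ k) :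
    D.pieces C j ∩ D.pieces C k = ∅ := by
  -- wlog j < k
  have key : ∀ {a b : ℕ}, a < b → D.pieces C a ∩ D.pieces C b = ∅ := by
    intro a b hab
    apply Set.eq_empty_iff_forall_notMem.mpr
    rintro x ⟨hxa, hxb⟩
    have h1b : D.pieces C b ⊆ D.rest C (a+1) :=
      ((D.step_spec (D.rest_good h1 h2 b).1 (D.rest_good h1 h2 b).2).2.1).trans
        (D.rest_mono h1 h2 (by omega))
    exact (h1b hxb).2 hxa
  rcases Nat.lt_or_ge j k with hlt | hge
  · exact key hlt
  · rw [Set.inter_comm]; exact key (by omega)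

lemma pieces_cover (h1 : IsClopen C) (h2 : C.Nonempty) {x : X} (hx : x ∈ C) :
    ∃ k, x ∈ D.pieces C k := by
  by_contra hno
  push_neg at hno
  have hin : ∀ k, x ∈ D.rest C k := by
    intro k
    induction k with
    | zero => exact hx
    | succ k ih => exact ⟨ih, hno k⟩
  have hmono : ∀ k, D.fidx (D.rest C k) < D.fidx (D.rest C (k+1)) := by
    intro k
    have hle : D.fidx (D.rest C k) ≤ D.fidx (D.rest C (k+1)) :=
      D.fidx_min _ (Set.diff_subset (D.fidx_mem _ (D.rest_good h1 h2 (k+1)).2))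
    rcases Nat.lt_or_ge (D.fidx (D.rest C k)) (D.fidx (D.rest C (k+1))) with hlt | hge
    · exact hlt
    · exfalso
      have heq : D.fidx (D.rest C (k+1)) = D.fidx (D.rest C k) := by omega
      have hmem := D.fidx_mem (D.rest C (k+1)) (D.rest_good h1 h2 (k+1)).2
      rw [heq] at hmem
      exact hmem.2 ((D.step_spec (D.rest_good h1 h2 k).1 (D.rest_good h1 h2 k).2).2.2.1)
  have hge : ∀ k, k ≤ D.fidx (D.rest C k) := by
    intro k
    induction k with
    | zero => omega
    | succ k ih => have := hmono k; omega
  obtain ⟨i, hi⟩ := D.surj x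
  have h1' : D.fidx (D.rest C (i+1)) ≤ i :=
    D.fidx_min _ (by rw [hi]; exact hin (i+1))
  have h2' := hge (i+1)
  omega

open Classical in
/-- The `ℤ`-indexed children of a node: split both `C ∩ B n` and `C \ B n` into
infinitely many clopen pieces (when nonempty). -/
noncomputable def kids (C : Set X) (n : ℕ) : ℤ → Set X := fun i =>
  if (C ∩ D.B n).Nonempty ∧ (C \ D.B n).Nonempty then
    if 0 ≤ i then D.pieces (C ∩ D.B n) i.toNat else D.pieces (C \ D.B n) (-(i+1)).toNat
  else D.pieces C ((Denumerable.eqv ℤ) i)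

lemma kids_good (h1 : IsClopen C) (h2 : C.Nonempty) (n : ℕ) (i : ℤ) :
    IsClopen (D.kids C n i) ∧ (D.kids C n i).Nonempty ∧ D.kids C n i ⊆ C := by
  rw [kids]
  split
  · rename_i hcase
    have hi1 : IsClopen (C ∩ D.B n) := h1.inter (D.clopen n)
    have hi2 : IsClopen (C \ D.B n) := h1.diff (D.clopen n)
    split
    · exact ⟨D.pieces_clopen hi1 hcase.1 _, D.pieces_nonempty hi1 hcase.1 _,
        (D.pieces_subset hi1 hcase.1 _).trans Set.inter_subset_left⟩
    · exact ⟨D.pieces_clopen hi2 hcase.2 _, D.pieces_nonempty hi2 hcase.2 _,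
        (D.pieces_subset hi2 hcase.2 _).trans Set.diff_subset⟩
  · exact ⟨D.pieces_clopen h1 h2 _, D.pieces_nonempty h1 h2 _, D.pieces_subset h1 h2 _⟩

lemma kids_refine (h1 : IsClopen C) (h2 : C.Nonempty) (n : ℕ) (i : ℤ) :
    D.kids C n i ⊆ D.B n ∨ D.kids C n i ⊆ (D.B n)ᶜ := by
  rw [kids]
  split
  · rename_i hcase
    have hi1 : IsClopen (C ∩ D.B n) := h1.inter (D.clopen n)
    have hi2 : IsClopen (C \ D.B n) := h1.diff (D.clopen n)
    split
    · exact Or.inl ((D.pieces_subset hi1 hcase.1 _).trans Set.inter_subset_right)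
    · exact Or.inr ((D.pieces_subset hi2 hcase.2 _).trans fun z hz => hz.2)
  · rename_i hcase
    rw [not_and_or] at hcase
    rcases hcase with hc | hc
    · refine Or.inr ((D.pieces_subset h1 h2 _).trans fun z hz hzB => ?_)
      exact hc ⟨z, hz, hzB⟩
    · refine Or.inl ((D.pieces_subset h1 h2 _).trans fun z hz => ?_)
      by_contra hzB
      exact hc ⟨z, hz, hzB⟩

lemma kids_disjoint (h1 : IsClopen C) (h2 : C.Nonempty) (n : ℕ) {i j : ℤ} (hij : i ≠ j) :
    D.kids C n i ∩ D.kids C n j = ∅ := by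
  simp only [kids]
  by_cases hcase : (C ∩ D.B n).Nonempty ∧ (C \ D.B n).Nonempty
  · rw [if_pos hcase, if_pos hcase]
    have hi1 : IsClopen (C ∩ D.B n) := h1.inter (D.clopen n)
    have hi2 : IsClopen (C \ D.B n) := h1.diff (D.clopen n)
    rcases le_or_gt 0 i with hi | hi <;> rcases le_or_gt 0 j with hj | hj
    · rw [if_pos hi, if_pos hj]
      exact D.pieces_disjoint hi1 hcase.1 (by omega)
    · rw [if_pos hi, if_neg (by omega : ¬ (0:ℤ) ≤ j)]
      apply Set.eq_empty_iff_forall_notMem.mpr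
      rintro x ⟨hxa, hxb⟩
      exact (D.pieces_subset hi2 hcase.2 _ hxb).2 (D.pieces_subset hi1 hcase.1 _ hxa).2
    · rw [if_neg (by omega : ¬ (0:ℤ) ≤ i), if_pos hj]
      apply Set.eq_empty_iff_forall_notMem.mpr
      rintro x ⟨hxa, hxb⟩
      exact (D.pieces_subset hi2 hcase.2 _ hxa).2 (D.pieces_subset hi1 hcase.1 _ hxb).2
    · rw [if_neg (by omega : ¬ (0:ℤ) ≤ i), if_neg (by omega : ¬ (0:ℤ) ≤ j)]
      exact D.pieces_disjoint hi2 hcase.2 (by omega)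
  · rw [if_neg hcase, if_neg hcase]
    exact D.pieces_disjoint h1 h2 (fun h => hij ((Denumerable.eqv ℤ).injective h))

lemma kids_cover (h1 : IsClopen C) (h2 : C.Nonempty) (n : ℕ) {x : X} (hx : x ∈ C) :
    ∃ i, x ∈ D.kids C n i := by
  by_cases hcase : (C ∩ D.B n).Nonempty ∧ (C \ D.B n).Nonempty
  · by_cases hxB : x ∈ D.B n
    · obtain ⟨k, hk⟩ := D.pieces_cover (h1.inter (D.clopen n)) hcase.1 ⟨hx, hxB⟩
      refine ⟨(k : ℤ), ?_⟩
      simp only [kids, if_pos hcase, if_pos (by omega : (0:ℤ) ≤ (k:ℤ))]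
      simpa using hk
    · obtain ⟨k, hk⟩ := D.pieces_cover (h1.diff (D.clopen n)) hcase.2 ⟨hx, hxB⟩
      refine ⟨-((k : ℤ)+1), ?_⟩
      simp only [kids, if_pos hcase, if_neg (by omega : ¬ (0:ℤ) ≤ -((k:ℤ)+1))]
      rw [show (-((-((k:ℤ)+1))+1)).toNat = k by omega]
      exact hk
  · obtain ⟨k, hk⟩ := D.pieces_cover h1 h2 hx
    refine ⟨(Denumerable.eqv ℤ).symm k, ?_⟩
    simp only [kids, if_neg hcase, Equiv.apply_symm_apply]
    exact hk

/-! ### The tree of nodes -/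

/-- The clopen set attached to a node of the tree (a reversed list of child indices). -/
noncomputable def node : List ℤ → Set X
  | [] => Set.univ
  | i :: s => D.kids (node s) s.length i

variable [Nonempty X]

lemma node_good : ∀ s : List ℤ, IsClopen (D.node s) ∧ (D.node s).Nonempty
  | [] => ⟨isClopen_univ, Set.univ_nonempty⟩
  | i :: s => by
    obtain ⟨h1, h2⟩ := node_good s
    obtain ⟨a, b, _⟩ := D.kids_good h1 h2 s.length i
    exact ⟨a, b⟩

lemma node_cons_subset (i : ℤ) (s : List ℤ) : D.node (i :: s) ⊆ D.node s :=
  (D.kids_good (D.node_good s).1 (D.node_good s).2 s.length i).2.2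

lemma node_cons_unique {x : X} {s : List ℤ} {i j : ℤ} (hi : x ∈ D.node (i :: s))
    (hj : x ∈ D.node (j :: s)) : i = j := by
  by_contra hij
  have := D.kids_disjoint (D.node_good s).1 (D.node_good s).2 s.length hij
  exact Set.eq_empty_iff_forall_notMem.mp this x ⟨hi, hj⟩

/-- The branch of a point: its node at every level. -/
noncomputable def branch (x : X) : (n : ℕ) → {s : List ℤ // x ∈ D.node s ∧ s.length = n}
  | 0 => ⟨[], Set.mem_univ x, rfl⟩
  | n+1 =>
    let p := branch x n
    have hex : ∃ i, x ∈ D.kids (D.node p.1) p.1.length i :=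
      D.kids_cover (D.node_good p.1).1 (D.node_good p.1).2 p.1.length p.2.1
    ⟨hex.choose :: p.1, hex.choose_spec, by simp [p.2.2]⟩

/-- The node of `x` at level `n`. -/
noncomputable def nd (x : X) (n : ℕ) : List ℤ := (D.branch x n).1

/-- The child index of `x` at level `n`. -/
noncomputable def code (x : X) (n : ℕ) : ℤ := (D.branch x (n+1)).1.headI

lemma nd_mem (x : X) (n : ℕ) : x ∈ D.node (D.nd x n) := (D.branch x n).2.1

lemma nd_length (x : X) (n : ℕ) : (D.nd x n).length = n := (D.branch x n).2.2

lemma nd_zero (x : X) : D.nd x 0 = [] := rfl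

lemma nd_succ (x : X) (n : ℕ) : D.nd x (n+1) = D.code x n :: D.nd x n := rfl

lemma mem_node_iff {x y : X} {n : ℕ} : y ∈ D.node (D.nd x n) ↔ D.nd y n = D.nd x n := by
  constructor
  · intro h
    induction n with
    | zero => rfl
    | succ n ih =>
      have hyn : D.nd y n = D.nd x n := ih (by
        have := h
        rw [nd_succ] at this
        exact D.node_cons_subset _ _ this)
      have h1 : y ∈ D.node (D.code x n :: D.nd x n) := by rw [← nd_succ]; exact h
      have h2 : y ∈ D.node (D.code y n :: D.nd x n) := by
        have := D.nd_mem y (n+1)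
        rw [nd_succ, hyn] at this
        exact this
      have := D.node_cons_unique h2 h1
      rw [nd_succ, nd_succ, this, hyn]
  · intro h
    rw [← h]
    exact D.nd_mem y n

lemma nd_eq_iff {x y : X} {n : ℕ} :
    D.nd x n = D.nd y n ↔ ∀ m, m < n → D.code x m = D.code y m := by
  induction n with
  | zero => simp [nd_zero]
  | succ n ih =>
    rw [nd_succ, nd_succ, List.cons.injEq]
    constructor
    · rintro ⟨h1, h2⟩ m hm
      rcases Nat.lt_or_ge m n with h | h
      · exact ih.mp h2 m h
      · have : m = n := by omega
        rwa [this]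
    · intro h
      exact ⟨h n (by omega), ih.mpr (fun m hm => h m (by omega))⟩

lemma code_injective : Function.Injective (fun x : X => D.code x) := by
  intro x y h
  by_contra hxy
  have hU : x ∈ ({y}ᶜ : Set X) := by simpa using hxy
  obtain ⟨m, hxB, hBU⟩ := D.basis x _ hU (isOpen_compl_singleton)
  have hnd : ∀ n, D.nd x n = D.nd y n := fun n => (D.nd_eq_iff).mpr (fun k _ => congrFun h k)
  have hyx : y ∈ D.node (D.nd x (m+1)) := by
    rw [hnd (m+1)]
    exact D.nd_mem y (m+1)
  have hxx : x ∈ D.node (D.nd x (m+1)) := D.nd_mem x (m+1)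
  have hval : D.node (D.nd x (m+1))
      = D.kids (D.node (D.nd x m)) (D.nd x m).length (D.code x m) := by
    rw [nd_succ]; rfl
  have href := D.kids_refine (D.node_good (D.nd x m)).1 (D.node_good (D.nd x m)).2
    (D.nd x m).length (D.code x m)
  rw [hval] at hyx hxx
  rcases href with hsub | hsub
  · have h1 : y ∈ D.B ((D.nd x m).length) := hsub hyx
    rw [D.nd_length x m] at h1
    exact hBU h1 rfl
  · have h1 : x ∈ (D.B ((D.nd x m).length))ᶜ := hsub hxx
    rw [D.nd_length x m] at h1
    exact h1 hxB

end CB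

namespace CB

variable {X : Type} [TopologicalSpace X] [T1Space X] (D : CB X)
include D

variable [Nonempty X]

lemma exists_sibling (x : X) (n : ℕ) (j : ℤ) :
    ∃ z : X, D.nd z n = D.nd x n ∧ D.code z n = j := by
  obtain ⟨z, hz⟩ := (D.kids_good (D.node_good (D.nd x n)).1 (D.node_good (D.nd x n)).2
    (D.nd x n).length j).2.1
  have hz' : z ∈ D.node (j :: D.nd x n) := hz
  have h1 : z ∈ D.node (D.nd x n) := D.node_cons_subset _ _ hz'
  have h2 : D.nd z n = D.nd x n := D.mem_node_iff.mp h1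
  have h3 : z ∈ D.node (D.code z n :: D.nd z n) := by
    rw [← nd_succ]; exact D.nd_mem z (n+1)
  rw [h2] at h3
  exact ⟨z, h2, D.node_cons_unique h3 hz'⟩

theorem homeoRat [Countable X] : Nonempty (X ≃ₜ ℚ) := by
  classical
  letI lo : LinearOrder X := LinearOrder.lift' (fun x => toLex (D.code x))
    (fun a b h => D.code_injective (by simpa using congrArg ofLex h))
  have hlt : ∀ x y : X, x < y ↔ ∃ n, (∀ m, m < n → D.code x m = D.code y m)
      ∧ D.code x n < D.code y n := fun x y => Iff.rfl
  have lt_of : ∀ {x y : X} {n : ℕ}, D.nd x n = D.nd y n → D.code x n < D.code y n → x < y := by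
    intro x y n h hc
    exact (hlt x y).mpr ⟨n, fun m hm => (D.nd_eq_iff.mp h) m hm, hc⟩
  -- no isolated extremes
  haveI : NoMaxOrder X := by
    constructor
    intro x
    obtain ⟨z, hz1, hz2⟩ := D.exists_sibling x 0 (D.code x 0 + 1)
    exact ⟨z, lt_of hz1.symm (by omega)⟩
  haveI : NoMinOrder X := by
    constructor
    intro x
    obtain ⟨z, hz1, hz2⟩ := D.exists_sibling x 0 (D.code x 0 - 1)
    exact ⟨z, lt_of hz1 (by omega)⟩
  haveI : DenselyOrdered X := by
    constructor
    intro x y hxy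
    obtain ⟨n, hag, hl⟩ := (hlt x y).mp hxy
    have hnd : D.nd x n = D.nd y n := D.nd_eq_iff.mpr hag
    have hle : D.code x n + 1 ≤ D.code y n := by omega
    rcases eq_or_lt_of_le hle with heq | hcase
    · -- equal: c y n = c x n + 1; go one level deeper
      obtain ⟨z, hz1, hz2⟩ := D.exists_sibling x (n+1) (D.code x (n+1) + 1)
      refine ⟨z, lt_of hz1.symm (by omega), ?_⟩
      have hzx : ∀ m, m < n + 1 → D.code z m = D.code x m := D.nd_eq_iff.mp hz1
      have hznd : D.nd z n = D.nd y n := by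
        rw [D.nd_eq_iff]
        intro m hm
        rw [hzx m (by omega)]
        exact hag m hm
      exact lt_of hznd (by rw [hzx n (by omega)]; omega)
    · -- c x n + 1 < c y n : use sibling at level n
      obtain ⟨z, hz1, hz2⟩ := D.exists_sibling x n (D.code x n + 1)
      refine ⟨z, lt_of hz1.symm (by omega), ?_⟩
      have hznd : D.nd z n = D.nd y n := by rw [hz1]; exact hnd
      exact lt_of hznd (by omega)
  -- the "between" lemma
  have btw : ∀ {a b x z : X} {n : ℕ}, D.nd a n = D.nd x n → D.nd b n = D.nd x n →
      a < z → z < b → z ∈ D.node (D.nd x n) := by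
    intro a b x z n ha hb haz hzb
    by_cases h : D.nd z n = D.nd x n
    · rw [← h]; exact D.nd_mem z n
    · exfalso
      have hex : ∃ m, D.code z m ≠ D.code x m := by
        by_contra h'
        push_neg at h'
        exact h (D.nd_eq_iff.mpr (fun m _ => h' m))
      have hexlt : ∃ m, m < n ∧ D.code z m ≠ D.code x m := by
        by_contra h'
        push_neg at h'
        exact h (D.nd_eq_iff.mpr h')
      set m0 := Nat.find hex with hm0_def
      have hm0 : D.code z m0 ≠ D.code x m0 := Nat.find_spec hex
      have hmin : ∀ j, j < m0 → D.code z j = D.code x j := by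
        intro j hj
        by_contra hne
        exact Nat.find_min hex hj hne
      have hm0n : m0 < n := by
        obtain ⟨m, hm1, hm2⟩ := hexlt
        have := Nat.find_min' hex hm2
        omega
      have hax : ∀ j, j < n → D.code a j = D.code x j := D.nd_eq_iff.mp ha
      have hbx : ∀ j, j < n → D.code b j = D.code x j := D.nd_eq_iff.mp hb
      rcases Int.lt_or_lt_of_ne hm0 with hc | hc
      · -- z < a, contradiction with a < z
        have : z < a := (hlt z a).mpr ⟨m0, fun j hj => by
          rw [hmin j hj, ← hax j (by omega)], by rw [hax m0 (by omega)]; exact hc⟩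
        exact absurd haz (lt_asymm this)
      · -- b < z, contradiction with z < b
        have : b < z := (hlt b z).mpr ⟨m0, fun j hj => by
          rw [hmin j hj, ← hbx j (by omega)], by rw [hbx m0 (by omega)]; exact hc⟩
        exact absurd hzb (lt_asymm this)
  haveI : OrderTopology X := by
    constructor
    refine le_antisymm (le_generateFrom ?_) ?_
    · -- rays are open
      rintro s ⟨a, rfl | rfl⟩
      · rw [isOpen_iff_forall_mem_open]
        intro y hy
        obtain ⟨n, hag, hl⟩ := (hlt a y).mp hy
        refine ⟨D.node (D.nd y (n+1)), ?_, (D.node_good _).1.isOpen, D.nd_mem y (n+1)⟩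
        intro z hz
        have hznd : D.nd z (n+1) = D.nd y (n+1) := D.mem_node_iff.mp hz
        have hzc : ∀ m, m < n + 1 → D.code z m = D.code y m := D.nd_eq_iff.mp hznd
        show a < z
        refine (hlt a z).mpr ⟨n, fun m hm => ?_, ?_⟩
        · rw [hag m hm, ← hzc m (by omega)]
        · rw [hzc n (by omega)]; exact hl
      · rw [isOpen_iff_forall_mem_open]
        intro y hy
        obtain ⟨n, hag, hl⟩ := (hlt y a).mp hy
        refine ⟨D.node (D.nd y (n+1)), ?_, (D.node_good _).1.isOpen, D.nd_mem y (n+1)⟩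
        intro z hz
        have hznd : D.nd z (n+1) = D.nd y (n+1) := D.mem_node_iff.mp hz
        have hzc : ∀ m, m < n + 1 → D.code z m = D.code y m := D.nd_eq_iff.mp hznd
        show z < a
        refine (hlt z a).mpr ⟨n, fun m hm => ?_, ?_⟩
        · rw [hzc m (by omega), hag m hm]
        · rw [hzc n (by omega)]; exact hl
    · -- every open set is order-open
      intro U hU
      show TopologicalSpace.GenerateOpen _ U
      have key : ∀ x, x ∈ U → ∃ O : Set X,
          TopologicalSpace.GenerateOpen {s | ∃ a, s = Set.Ioi a ∨ s = Set.Iio a} O ∧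
          x ∈ O ∧ O ⊆ U := by
        intro x hxU
        obtain ⟨m, hxB, hBU⟩ := D.basis x U hxU hU
        -- the node at level m+1 is inside B m
        have hval : D.node (D.nd x (m+1))
            = D.kids (D.node (D.nd x m)) (D.nd x m).length (D.code x m) := by
          rw [nd_succ]; rfl
        have href := D.kids_refine (D.node_good (D.nd x m)).1 (D.node_good (D.nd x m)).2
          (D.nd x m).length (D.code x m)
        have hsubB : D.node (D.nd x (m+1)) ⊆ D.B m := by
          rcases href with hsub | hsub
          · rw [← hval] at hsub
            rwa [D.nd_length x m] at hsub
          · exfalso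
            rw [← hval] at hsub
            have := hsub (D.nd_mem x (m+1))
            rw [D.nd_length x m] at this
            exact this hxB
        obtain ⟨a, ha1, ha2⟩ := D.exists_sibling x (m+1) (D.code x (m+1) - 1)
        obtain ⟨b, hb1, hb2⟩ := D.exists_sibling x (m+1) (D.code x (m+1) + 1)
        refine ⟨Set.Ioi a ∩ Set.Iio b,
          TopologicalSpace.GenerateOpen.inter _ _
            (TopologicalSpace.GenerateOpen.basic _ ⟨a, Or.inl rfl⟩)
            (TopologicalSpace.GenerateOpen.basic _ ⟨b, Or.inr rfl⟩), ?_, ?_⟩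
        · exact ⟨lt_of ha1 (by omega), lt_of hb1.symm (by omega)⟩
        · rintro z ⟨hz1, hz2⟩
          exact hBU (hsubB (btw ha1 hb1 hz1 hz2))
      choose O hO hxO hOU using fun x : U => key x.1 x.2
      have hUeq : U = ⋃ x : U, O x := by
        apply Set.Subset.antisymm
        · intro x hx
          exact Set.mem_iUnion.mpr ⟨⟨x, hx⟩, hxO ⟨x, hx⟩⟩
        · intro x hx
          obtain ⟨i, hi⟩ := Set.mem_iUnion.mp hx
          exact hOU i hi
      rw [hUeq, ← Set.sUnion_range]
      apply TopologicalSpace.GenerateOpen.sUnion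
      rintro _ ⟨i, rfl⟩
      exact hO i
  obtain ⟨f⟩ := Order.iso_of_countable_dense X ℚ
  exact ⟨f.toHomeomorph⟩

end CB

theorem primes_dense_regular_homeomorphic_rat :
    Dense {p : ℕ+ | (p : ℕ).Prime} ∧
    RegularSpace ↥{p : ℕ+ | (p : ℕ).Prime} ∧
    Nonempty (↥{p : ℕ+ | (p : ℕ).Prime} ≃ₜ ℚ) := by
  haveI : T1Space ↥{p : ℕ+ | (p : ℕ).Prime} := t1_primes
  haveI : Nonempty ↥{p : ℕ+ | (p : ℕ).Prime} :=
    ⟨⟨⟨2, by norm_num⟩, (by exact Nat.prime_two : ((⟨2, by norm_num⟩ : ℕ+) : ℕ).Prime)⟩⟩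
  obtain ⟨e, he⟩ := exists_surjective_nat ↥{p : ℕ+ | (p : ℕ).Prime}
  let D : CB ↥{p : ℕ+ | (p : ℕ).Prime} :=
    ⟨e, he, famB, famB_clopen, famB_basis, nebot_primes⟩
  exact ⟨dense_primes, regular_primes, D.homeoRat⟩
end

section
/- Every finite-to-one progressive function f : ℕ⁺ → ℕ⁺ is continuous as a self-map of the Golomb space. -/
/-- `dag x y` is the greatest divisor of `x` which is coprime with `y`. -/
def dag (x y : ℕ) : ℕ :=
  (Nat.factorization x).prod fun p k => if p ∣ y then 1 else p ^ k

/-- A function `f : ℕ+ → ℕ+` is progressive if every prime divisor of `x`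
divides `f x`, and for `x < y` the number `(y - x) † f x` divides `f y - f x`. -/
def Progressive (f : ℕ+ → ℕ+) : Prop :=
  (∀ x : ℕ+, ∀ p : ℕ, p.Prime → p ∣ (x : ℕ) → p ∣ (f x : ℕ)) ∧
  (∀ x y : ℕ+, x < y →
    ((dag ((y : ℕ) - (x : ℕ)) (f x) : ℤ)) ∣ ((f y : ℕ) : ℤ) - ((f x : ℕ) : ℤ))

lemma dvd_dag {b m z : ℕ} (hm : m ≠ 0) (hbm : b ∣ m) (hbz : Nat.Coprime b z) :
    b ∣ dag m z := by
  set comp : ℕ := (Nat.factorization m).prod fun p k => if p ∣ z then p ^ k else 1 with hcomp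
  have h1 : dag m z * comp = m := by
    rw [dag, hcomp, Finsupp.prod, Finsupp.prod, ← Finset.prod_mul_distrib]
    have : ∀ p ∈ (Nat.factorization m).support,
        (if p ∣ z then 1 else p ^ (Nat.factorization m) p) *
          (if p ∣ z then p ^ (Nat.factorization m) p else 1) =
            p ^ (Nat.factorization m) p := by
      intro p _; split_ifs <;> ring
    rw [Finset.prod_congr rfl this]
    exact Nat.factorization_prod_pow_eq_self hm
  have h2 : Nat.Coprime b comp := by
    rw [hcomp, Finsupp.prod]
    apply Nat.Coprime.prod_right
    intro p hp
    split_ifs with h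
    · exact (Nat.Coprime.coprime_dvd_right h hbz).pow_right _
    · exact Nat.coprime_one_right b
  exact h2.dvd_of_dvd_mul_right (by rw [h1]; exact hbm)

theorem continuous_of_finiteToOne_progressive (f : ℕ+ → ℕ+)
    (hfin : ∀ y : ℕ+, (f ⁻¹' {y}).Finite) (hprog : Progressive f) :
    Continuous f := by
  rw [continuous_generateFrom_iff]
  intro S hS
  obtain ⟨a, b, ha, hb, hab, rfl⟩ := hS
  -- it suffices to find a basic open set around each point of the preimage
  have key : ∀ x : ℕ+, f x ∈ {y : ℕ+ | ∃ n : ℕ, (y : ℕ) = a + b * n} →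
      ∃ U ∈ golombBasis, x ∈ U ∧ U ⊆ f ⁻¹' {y : ℕ+ | ∃ n : ℕ, (y : ℕ) = a + b * n} := by
    intro x hx
    obtain ⟨m, hm⟩ := hx
    -- f x is coprime with b
    have hfxb : Nat.Coprime ((f x : ℕ)) b := by
      rw [hm]; exact (Nat.coprime_add_mul_left_left a b m).mpr hab
    -- x is coprime with b
    have hxb : Nat.Coprime ((x : ℕ)) b := by
      by_contra h
      have hg : Nat.gcd (x : ℕ) b ≠ 1 := h
      set q := (Nat.gcd (x : ℕ) b).minFac with hq
      have hqp : q.Prime := Nat.minFac_prime hg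
      have hqx : q ∣ (x : ℕ) := (Nat.minFac_dvd _).trans (Nat.gcd_dvd_left _ _)
      have hqb : q ∣ b := (Nat.minFac_dvd _).trans (Nat.gcd_dvd_right _ _)
      have hqfx : q ∣ (f x : ℕ) := hprog.1 x q hqp hqx
      have : q ∣ 1 := hfxb ▸ Nat.dvd_gcd hqfx hqb
      exact hqp.one_lt.ne' (Nat.dvd_one.mp this)
    -- the bad set of points whose image is below a
    have hEfin : {y : ℕ+ | (f y : ℕ) < a}.Finite := by
      have : {y : ℕ+ | (f y : ℕ) < a} ⊆ ⋃ z ∈ {z : ℕ+ | (z : ℕ) < a}, f ⁻¹' {z} := by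
        intro y hy
        exact Set.mem_biUnion hy rfl
      refine Set.Finite.subset (Set.Finite.biUnion ?_ fun z _ => hfin z) this
      have : {z : ℕ+ | (z : ℕ) < a} ⊆ (PNat.val) ⁻¹' (Set.Iio a) := fun z hz => hz
      exact Set.Finite.preimage (fun u _ v _ h => PNat.coe_injective h) (Set.finite_Iio a)
        |>.subset this
    obtain ⟨M, hM⟩ : ∃ M : ℕ, ∀ y ∈ {y : ℕ+ | (f y : ℕ) < a}, (y : ℕ) ≤ M := by
      obtain ⟨M, hM⟩ := (hEfin.image (fun y : ℕ+ => (y : ℕ))).bddAbove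
      exact ⟨M, fun y hy => hM (Set.mem_image_of_mem _ hy)⟩
    obtain ⟨p, hpge, hpp⟩ := Nat.exists_infinite_primes (M + (x : ℕ) + 1)
    set c := b * p with hc
    have hcpos : 1 ≤ c := Nat.one_le_iff_ne_zero.mpr (Nat.mul_ne_zero (by omega) hpp.pos.ne')
    have hxc : Nat.Coprime ((x : ℕ)) c := by
      refine Nat.Coprime.mul_right hxb ?_
      rw [Nat.coprime_comm]
      exact (Nat.Prime.coprime_iff_not_dvd hpp).mpr fun hd =>
        absurd (Nat.le_of_dvd x.pos hd) (by omega)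
    refine ⟨{y : ℕ+ | ∃ n : ℕ, (y : ℕ) = (x : ℕ) + c * n}, ⟨(x : ℕ), c, x.one_le, hcpos, hxc, rfl⟩,
      ⟨0, by simp⟩, ?_⟩
    rintro y ⟨n, hn⟩
    rcases Nat.eq_zero_or_pos n with rfl | hnpos
    · have : y = x := PNat.coe_injective (by omega)
      exact this ▸ ⟨m, hm⟩
    · have hxy : x < y := by
        rw [← PNat.coe_lt_coe, hn]
        have : 1 ≤ c * n := Nat.one_le_iff_ne_zero.mpr
          (Nat.mul_ne_zero (by omega) hnpos.ne')
        omega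
      have hsub : (y : ℕ) - (x : ℕ) = c * n := by omega
      have hdag : b ∣ dag ((y : ℕ) - (x : ℕ)) (f x) := by
        rw [hsub]
        exact dvd_dag (Nat.mul_ne_zero (by omega) hnpos.ne') ⟨p * n, by rw [hc]; ring⟩ hfxb.symm
      have hdvd : (b : ℤ) ∣ ((f y : ℕ) : ℤ) - ((f x : ℕ) : ℤ) :=
        dvd_trans (Int.natCast_dvd_natCast.mpr hdag) (hprog.2 x y hxy)
      have hyM : M < (y : ℕ) := by
        have : p ≤ c := Nat.le_mul_of_pos_left p (by omega)
        have : c ≤ c * n := Nat.le_mul_of_pos_right c hnpos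
        omega
      have hfy_ge : a ≤ (f y : ℕ) := by
        by_contra h
        exact absurd (hM y (by simpa using Nat.lt_of_not_le h)) (by omega)
      have hdvd2 : (b : ℤ) ∣ ((f y : ℕ) : ℤ) - (a : ℤ) := by
        have : ((f x : ℕ) : ℤ) - (a : ℤ) = (b : ℤ) * m := by
          have := hm; push_cast [this]; ring
        have h2 : (b : ℤ) ∣ ((f x : ℕ) : ℤ) - (a : ℤ) := ⟨m, this⟩
        have := dvd_add hdvd h2
        simpa using this
      obtain ⟨k, hk⟩ := hdvd2
      have hk0 : 0 ≤ k := by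
        by_contra hk0
        have : (b : ℤ) * k < 0 := mul_neg_of_pos_of_neg (by exact_mod_cast hb) (by omega)
        omega
      refine ⟨k.toNat, ?_⟩
      have hkk : (k.toNat : ℤ) = k := Int.toNat_of_nonneg hk0
      have : ((f y : ℕ) : ℤ) = (a : ℤ) + (b : ℤ) * (k.toNat : ℤ) := by rw [hkk]; omega
      exact_mod_cast this
  -- conclude openness from the pointwise basic neighborhoods
  have : f ⁻¹' {y : ℕ+ | ∃ n : ℕ, (y : ℕ) = a + b * n} =
      ⋃₀ {U | U ∈ golombBasis ∧ U ⊆ f ⁻¹' {y : ℕ+ | ∃ n : ℕ, (y : ℕ) = a + b * n}} := by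
    apply Set.Subset.antisymm
    · intro x hx
      obtain ⟨U, hU, hxU, hUsub⟩ := key x hx
      exact ⟨U, ⟨hU, hUsub⟩, hxU⟩
    · rintro x ⟨U, ⟨_, hUsub⟩, hxU⟩
      exact hUsub hxU
  rw [this]
  exact isOpen_sUnion fun U hU => TopologicalSpace.isOpen_generateFrom_of_mem hU.1
end

section
/- The map f : ℕ⁺ → ℕ⁺ defined by f(x) = x(x+1)/2 is not continuous as a self-map of the Golomb space; in particular, f is discontinuous at x = 2. -/
/-- Any Golomb-open set containing `2` contains a full odd arithmetic
progression `{x ≥ 2 : x ≡ 2 [MOD b]}` with `b` odd. -/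
lemma golomb_open_two (V : Set ℕ+) (hV : TopologicalSpace.GenerateOpen golombBasis V)
    (h2 : (2 : ℕ+) ∈ V) :
    ∃ b : ℕ, b % 2 = 1 ∧
      ∀ x : ℕ+, 2 ≤ (x : ℕ) → (x : ℕ) ≡ 2 [MOD b] → x ∈ V := by
  induction hV with
  | basic s hs =>
      obtain ⟨a, b, ha, hb, hco, rfl⟩ := hs
      obtain ⟨n0, hn0⟩ := h2
      simp only [PNat.mk_ofNat, PNat.val_ofNat] at hn0
      -- b must be odd
      have hbodd : b % 2 = 1 := by
        by_contra h
        have hk : ∃ k, b = 2 * k := ⟨b / 2, by omega⟩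
        obtain ⟨k, hk⟩ := hk
        have hbn : b * n0 = 2 * (k * n0) := by rw [hk]; ring
        have h2a : 2 ∣ a := by omega
        have h2b : 2 ∣ b := ⟨k, hk⟩
        have hdd : (2 : ℕ) ∣ Nat.gcd a b := Nat.dvd_gcd h2a h2b
        rw [hco] at hdd
        exact absurd hdd (by norm_num)
      refine ⟨b, hbodd, fun x hx hmod => ?_⟩
      have ha2 : a ≤ 2 := by omega
      have h2a : a ≡ 2 [MOD b] := (Nat.modEq_iff_dvd' ha2).2 ⟨n0, by omega⟩
      have hxa : (x : ℕ) ≡ a [MOD b] := hmod.trans h2a.symm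
      have hax : a ≤ (x : ℕ) := le_trans ha2 hx
      have hdvd : b ∣ (x : ℕ) - a := (Nat.modEq_iff_dvd' hax).1 hxa.symm
      obtain ⟨n, hn⟩ := hdvd
      exact ⟨n, by omega⟩
  | univ => exact ⟨1, rfl, fun x _ _ => trivial⟩
  | inter s t _ _ ihs iht =>
      obtain ⟨b1, hb1, h1⟩ := ihs h2.1
      obtain ⟨b2, hb2, h2'⟩ := iht h2.2
      refine ⟨b1 * b2, by simp [Nat.mul_mod, hb1, hb2], fun x hx hmod => ?_⟩
      exact ⟨h1 x hx (hmod.of_mul_right b2), h2' x hx (hmod.of_mul_left b1)⟩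
  | sUnion S _ ih =>
      obtain ⟨t, htS, ht2⟩ := h2
      obtain ⟨b, hb, h⟩ := ih t htS ht2
      exact ⟨b, hb, fun x hx hmod => ⟨t, htS, h x hx hmod⟩⟩

theorem triangular_not_continuous (f : ℕ+ → ℕ+)
    (hf : ∀ x : ℕ+, 2 * (f x : ℕ) = (x : ℕ) * ((x : ℕ) + 1)) :
    ¬ Continuous f ∧ ¬ ContinuousAt f 2 := by
  have hf2 : f 2 = 3 := by
    have h := hf 2
    simp at h
    have h3 : (f 2 : ℕ) = 3 := by omega
    have : ((f 2 : ℕ+) : ℕ) = ((3 : ℕ+) : ℕ) := by simp [h3]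
    exact PNat.coe_injective this
  -- the open set U = {x ≡ 3 mod 4}
  set U : Set ℕ+ := {x : ℕ+ | ∃ n : ℕ, (x : ℕ) = 3 + 4 * n} with hU
  have hUopen : IsOpen U :=
    TopologicalSpace.GenerateOpen.basic U ⟨3, 4, by norm_num, by norm_num, by norm_num, rfl⟩
  have hUmem : f 2 ∈ U := by
    rw [hf2]; exact ⟨0, by norm_num⟩
  have hnotAt : ¬ ContinuousAt f 2 := by
    intro hc
    have hnh : f ⁻¹' U ∈ nhds (2 : ℕ+) := hc (hUopen.mem_nhds hUmem)
    rw [mem_nhds_iff] at hnh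
    obtain ⟨V, hVU, hVopen, hV2⟩ := hnh
    obtain ⟨b, hbodd, hb⟩ := golomb_open_two V hVopen hV2
    have hbpos : 1 ≤ b := by omega
    -- coprime b 8
    have h2b : Nat.Coprime 2 b := (Nat.prime_two.coprime_iff_not_dvd).2 (by omega)
    have hco : Nat.Coprime b 8 := by
      have h8 : (8 : ℕ) = 2 ^ 3 := by norm_num
      rw [h8]
      exact Nat.Coprime.pow_right 3 h2b.symm
    obtain ⟨hk1, hk2⟩ := (Nat.chineseRemainder hco 2 0).2
    set m : ℕ := ((Nat.chineseRemainder hco 2 0) : ℕ) with hm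
    unfold Nat.ModEq at hk1 hk2
    set xv : ℕ := m + 8 * b with hxv
    have hxv2 : 2 ≤ xv := by
      have : 8 ≤ 8 * b := by omega
      omega
    have hxvb : xv ≡ 2 [MOD b] := by
      unfold Nat.ModEq
      have h1 : xv % b = m % b := by
        simp [hxv, Nat.add_mul_mod_self_left, Nat.mul_comm]
      omega
    have hxv8 : 8 ∣ xv := by
      have h1 : xv % 8 = m % 8 := by
        simp [hxv, Nat.add_mul_mod_self_left]
      omega
    set X : ℕ+ := ⟨xv, by omega⟩ with hX
    have hXV : X ∈ V := hb X hxv2 hxvb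
    have hXU : f X ∈ U := hVU hXV
    obtain ⟨n, hn⟩ := hXU
    have hfx := hf X
    have hXval : (X : ℕ) = xv := rfl
    rw [hXval, hn] at hfx
    obtain ⟨q, hq⟩ := hxv8
    have hcontra : 2 * (3 + 4 * n) = 8 * q * (8 * q + 1) := by rw [hfx, hq]
    have hqq : 8 * q * (8 * q + 1) = 8 * (q * (8 * q + 1)) := by ring
    omega
  exact ⟨fun hc => hnotAt hc.continuousAt, hnotAt⟩
end

section
/- For every n ≥ 0, the set {x² + nx : x ∈ ℕ⁺} is closed in the Golomb space. -/
open NumberTheorySymbols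

theorem Nat.exists_prime_odd_factorization_of_not_isSquare {N : ℕ} (h : ¬IsSquare N) :
    ∃ q, q.Prime ∧ Odd (N.factorization q) := by
  obtain ⟨a, s, rfl, ha⟩ := Nat.sq_mul_squarefree N
  have hs : s ≠ 0 := by rintro rfl; exact h ⟨0, by simp⟩
  have ha0 : a ≠ 0 := by rintro rfl; exact h ⟨0, by simp⟩
  have ha1 : a ≠ 1 := by rintro rfl; exact h ⟨s, by ring⟩
  have hq := Nat.minFac_prime ha1
  refine ⟨a.minFac, hq, s.factorization a.minFac, ?_⟩
  rw [Nat.factorization_mul (pow_ne_zero 2 hs) ha0, Nat.factorization_pow, Finsupp.add_apply,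
    Nat.factorization_eq_one_of_squarefree ha hq (Nat.minFac_dvd a)]
  simp [two_mul]

namespace jacobiSym

theorem eq_one_of_modEq_one {a b : ℕ} (h : b ≡ 1 [MOD 4 * a]) : J(a | b) = 1 := by
  have hb : Odd b := Nat.odd_iff.mpr (h.of_dvd (Dvd.intro (2 * a) (by ring)))
  rw [mod_right' a hb, h, Nat.one_mod_eq_one.mpr (by omega), one_right]

theorem exists_prime_left_eq_neg_one_and_modEq_one {q M : ℕ} (hq : q.Prime)
    (hqM : ¬q ∣ M) : ∃ b, J(q | b) = -1 ∧ b ≡ 1 [MOD 4 * M] := by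
  obtain rfl | hq2 := eq_or_ne q 2
  · have hM : M % 2 = 1 := Nat.two_dvd_ne_zero.mp hqM
    refine ⟨4 * M + 1, ?_, ((Nat.modEq_iff_dvd' (by omega)).mpr (by simp)).symm⟩
    rw [Nat.cast_ofNat, at_two ⟨2 * M, by ring⟩, ZMod.χ₈_nat_mod_eight,
      show (4 * M + 1) % 8 = 5 by omega]
    decide
  · have := Fact.mk hq
    have hq_odd := hq.odd_of_ne_two hq2
    obtain ⟨c, hc⟩ := FiniteField.exists_nonsquare (F := ZMod q) (by rwa [ZMod.ringChar_zmod_n])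
    have hcop : Nat.Coprime q (4 * M) :=
      Nat.Coprime.mul_right (Nat.Coprime.pow_right 2 (Nat.coprime_two_right.mpr hq_odd))
        ((Nat.Prime.coprime_iff_not_dvd hq).mpr hqM)
    obtain ⟨b, hbc, hb1⟩ := Nat.chineseRemainder hcop c.val 1
    refine ⟨b, ?_, hb1⟩
    have hb4 : b % 4 = 1 := hb1.of_dvd (Dvd.intro M rfl)
    have hbc : ((b : ℤ) : ZMod q) = c := by
      rw [Int.cast_natCast, (ZMod.natCast_eq_natCast_iff _ _ _).mpr hbc, ZMod.natCast_zmod_val]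
    rw [quadratic_reciprocity_one_mod_four' hq_odd hb4,
      ZMod.nonsquare_iff_jacobiSym_eq_neg_one, hbc]
    exact hc

theorem exists_odd_eq_neg_one_of_not_isSquare {N : ℕ} (h : ¬IsSquare N) :
    ∃ b, Odd b ∧ J(N | b) = -1 := by
  obtain ⟨q, hq, hodd⟩ := Nat.exists_prime_odd_factorization_of_not_isSquare h
  have hN : N ≠ 0 := by rintro rfl; exact h ⟨0, rfl⟩
  obtain ⟨b, hqb, hb⟩ :=
    exists_prime_left_eq_neg_one_and_modEq_one hq (Nat.not_dvd_ordCompl hq hN)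
  have hsplit : (N : ℤ) = (q : ℤ) ^ N.factorization q * (ordCompl[q] N : ℕ) := by
    exact_mod_cast (Nat.ordProj_mul_ordCompl_eq_self N q).symm
  refine ⟨b, Nat.odd_iff.mpr (hb.of_dvd (by omega)), ?_⟩
  rw [hsplit, mul_left, pow_left, hqb, hodd.neg_one_pow, eq_one_of_modEq_one hb, mul_one]

end jacobiSym

theorem ZMod.exists_prime_gt_not_isSquare_natCast {N : ℕ} (h : ¬IsSquare N) (B : ℕ) :
    ∃ p > B, p.Prime ∧ ¬IsSquare (N : ZMod p) := by
  obtain ⟨b, hb, hJ⟩ := jacobiSym.exists_odd_eq_neg_one_of_not_isSquare h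
  have hN : N ≠ 0 := by rintro rfl; exact h ⟨0, rfl⟩
  have hNb : Nat.Coprime N b := by
    rw [Nat.Coprime, ← Int.gcd_natCast_natCast]
    by_contra hg
    simpa [hJ] using jacobiSym.eq_zero_iff.mpr ⟨hb.pos.ne', hg⟩
  have hcop : Nat.Coprime b (4 * N) :=
    Nat.Coprime.mul_right (Nat.Coprime.pow_right 2 (Nat.coprime_two_right.mpr hb)) hNb.symm
  obtain ⟨p, hpB, hp, hpb⟩ := Nat.forall_exists_prime_gt_and_modEq B (by omega) hcop
  have hp_odd : Odd p :=
    Nat.odd_iff.mpr (Eq.trans (hpb.of_dvd (by omega : 2 ∣ 4 * N)) (Nat.odd_iff.mp hb))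
  have hJp : J(N | p) = -1 := by
    rw [jacobiSym.mod_right' N hp_odd, hpb, ← jacobiSym.mod_right' N hb, hJ]
  exact ⟨p, hpB, hp, by simpa using ZMod.nonsquare_of_jacobiSym_eq_neg_one hJp⟩

theorem Nat.exists_pos_eq_mul_self_add_mul_of_isSquare {y n : ℕ} (hy : 0 < y)
    (h : IsSquare (4 * y + n * n)) : ∃ x, 0 < x ∧ y = x * x + n * x := by
  obtain ⟨m, hm⟩ := h
  have hnm : n < m := Nat.mul_self_lt_mul_self_iff.mp (by omega)
  have hpar : Even m ↔ Even n := by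
    simpa [Nat.even_add, Nat.even_mul, show Even 4 from ⟨2, rfl⟩] using (congrArg Even hm).symm
  obtain ⟨x, rfl⟩ : ∃ x, m = n + 2 * x := ⟨(m - n) / 2, by grind⟩
  exact ⟨x, by nlinarith, by nlinarith⟩

theorem isOpen_setOf_coe_eq_add_mul {a b : ℕ} (ha : 1 ≤ a) (hb : 1 ≤ b) (hab : a.Coprime b) :
    IsOpen {x : ℕ+ | ∃ k : ℕ, (x : ℕ) = a + b * k} :=
  TopologicalSpace.GenerateOpen.basic _ ⟨a, b, ha, hb, hab, rfl⟩

theorem closed_quadratic_image (n : ℕ) :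
    IsClosed {y : ℕ+ | ∃ x : ℕ+, (y : ℕ) = (x : ℕ) * (x : ℕ) + n * (x : ℕ)} := by
  rw [← isOpen_compl_iff, isOpen_iff_forall_mem_open]
  intro y hy
  have hns : ¬IsSquare (4 * (y : ℕ) + n * n) := fun hsq => hy <| by
    obtain ⟨x, hx, hyx⟩ := Nat.exists_pos_eq_mul_self_add_mul_of_isSquare y.pos hsq
    exact ⟨⟨x, hx⟩, hyx⟩
  obtain ⟨p, hpy, hp, hnsq⟩ := ZMod.exists_prime_gt_not_isSquare_natCast hns y
  refine ⟨{z : ℕ+ | ∃ k : ℕ, (z : ℕ) = y + p * k}, ?_,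
    isOpen_setOf_coe_eq_add_mul y.pos hp.one_lt.le (Nat.coprime_of_lt_prime y.ne_zero hpy hp).symm,
    ⟨0, by simp⟩⟩
  rintro z ⟨k, hz⟩ ⟨x, hx⟩
  have hyx : ((y : ℕ) : ZMod p) = (x : ℕ) * (x : ℕ) + n * (x : ℕ) := by
    simpa using congrArg (Nat.cast : ℕ → ZMod p) (hz.symm.trans hx)
  exact hnsq ⟨2 * x + n, by push_cast; linear_combination 4 * hyx⟩
end

section
/- For every odd prime p and every k ≥ 1, the congruence x⁸ ≡ 16 (mod p^k) has a solution. -/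
private lemma octic_base (p : ℕ) (hp : p.Prime) (hodd : p ≠ 2) :
    ∃ y : ZMod p, y ^ 8 = 16 := by
  haveI : Fact p.Prime := ⟨hp⟩
  have hp2 : p % 2 = 1 := Nat.odd_iff.mp (hp.odd_of_ne_two hodd)
  have h8 : p % 8 = 1 ∨ p % 8 = 3 ∨ p % 8 = 5 ∨ p % 8 = 7 := by omega
  have hsq : IsSquare (2 : ZMod p) ∨ IsSquare (-2 : ZMod p) ∨ IsSquare (-1 : ZMod p) := by
    rcases h8 with h | h | h | h
    · exact Or.inl ((ZMod.exists_sq_eq_two_iff hodd).mpr (Or.inl h))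
    · exact Or.inr (Or.inl ((ZMod.exists_sq_eq_neg_two_iff hodd).mpr (Or.inr h)))
    · exact Or.inr (Or.inr (ZMod.exists_sq_eq_neg_one_iff.mpr (by omega)))
    · exact Or.inl ((ZMod.exists_sq_eq_two_iff hodd).mpr (Or.inr h))
  rcases hsq with ⟨c, hc⟩ | ⟨c, hc⟩ | ⟨c, hc⟩
  · refine ⟨c, ?_⟩
    have : c ^ 8 = (c * c) ^ 4 := by ring
    rw [this, ← hc]; norm_num
  · refine ⟨c, ?_⟩
    have : c ^ 8 = (c * c) ^ 4 := by ring
    rw [this, ← hc]; norm_num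
  · refine ⟨c + 1, ?_⟩
    have hc2 : c * c = -1 := hc.symm
    have h2 : (c + 1) ^ 2 = 2 * c := by
      have : (c + 1) ^ 2 = c * c + 2 * c + 1 := by ring
      rw [this, hc2]; ring
    have h3 : (c + 1) ^ 8 = ((c + 1) ^ 2) ^ 4 := by ring
    rw [h3, h2]
    have h4 : (2 * c) ^ 4 = 16 * ((c * c) * (c * c)) := by ring
    rw [h4, hc2]; norm_num

private lemma octic_lift (p : ℕ) (hp : p.Prime) (hodd : p ≠ 2) (k : ℕ) (hk : 1 ≤ k)
    (x : ℤ) (hx : (p : ℤ) ^ k ∣ x ^ 8 - 16) :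
    ∃ x' : ℤ, (p : ℤ) ^ (k + 1) ∣ x' ^ 8 - 16 := by
  haveI : Fact p.Prime := ⟨hp⟩
  -- p does not divide x
  have hpx : ¬ (p : ℤ) ∣ x := by
    intro hdvd
    have h1 : (p : ℤ) ∣ x ^ 8 - 16 :=
      dvd_trans (dvd_pow_self _ (by omega : k ≠ 0)) hx
    have h2 : (p : ℤ) ∣ x ^ 8 := hdvd.pow (by norm_num)
    have h3 : (p : ℤ) ∣ 16 := (dvd_sub_right h2).mp h1
    have h4 : p ∣ 2 ^ 4 := by exact_mod_cast (by norm_num : (16:ℤ) = 2 ^ 4) ▸ h3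
    exact hodd ((Nat.prime_dvd_prime_iff_eq hp Nat.prime_two).mp (hp.dvd_of_dvd_pow h4))
  obtain ⟨d, hd⟩ := hx
  have hx0 : ((x : ZMod p) ≠ 0) := fun h =>
    hpx ((ZMod.intCast_zmod_eq_zero_iff_dvd x p).mp h)
  have h2z : (2 : ZMod p) ≠ 0 := by
    intro h
    have : ((2 : ℕ) : ZMod p) = 0 := by exact_mod_cast h
    have := (ZMod.natCast_eq_zero_iff 2 p).mp this
    exact hodd ((Nat.prime_dvd_prime_iff_eq hp Nat.prime_two).mp this)
  have h8z : (8 : ZMod p) ≠ 0 := by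
    have : (8 : ZMod p) = 2 ^ 3 := by norm_num
    rw [this]; exact pow_ne_zero _ h2z
  have h8x : ((8 * x ^ 7 : ℤ) : ZMod p) ≠ 0 := by
    push_cast
    exact mul_ne_zero h8z (pow_ne_zero _ hx0)
  set u : ZMod p := ((8 * x ^ 7 : ℤ) : ZMod p)⁻¹ * (-(d : ZMod p)) with hu
  set t : ℤ := (u.val : ℤ) with ht
  have hsolve : (p : ℤ) ∣ 8 * x ^ 7 * t + d := by
    have hcast : ((8 * x ^ 7 * t + d : ℤ) : ZMod p)
        = ((8 * x ^ 7 : ℤ) : ZMod p) * u + (d : ZMod p) := by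
      push_cast [ht, ZMod.natCast_val, ZMod.cast_id]
      ring
    rw [← ZMod.intCast_zmod_eq_zero_iff_dvd, hcast, hu, ← mul_assoc,
      mul_inv_cancel₀ h8x]
    ring
  refine ⟨x + t * (p : ℤ) ^ k, ?_⟩
  have hexp : (x + t * (p : ℤ) ^ k) ^ 8 - 16 = (x ^ 8 - 16) + 8 * x ^ 7 * (t * (p : ℤ) ^ k)
      + (t * (p : ℤ) ^ k) ^ 2 * (28*x^6 + 56*x^5*(t * (p : ℤ) ^ k) + 70*x^4*(t * (p : ℤ) ^ k)^2
        + 56*x^3*(t * (p : ℤ) ^ k)^3 + 28*x^2*(t * (p : ℤ) ^ k)^4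
        + 8*x*(t * (p : ℤ) ^ k)^5 + (t * (p : ℤ) ^ k)^6) := by
    ring
  rw [hexp, hd]
  have e1 : (p : ℤ) ^ k * d + 8 * x ^ 7 * (t * (p : ℤ) ^ k)
      = (p : ℤ) ^ k * (8 * x ^ 7 * t + d) := by ring
  have d1 : (p : ℤ) ^ (k + 1) ∣ (p : ℤ) ^ k * d + 8 * x ^ 7 * (t * (p : ℤ) ^ k) := by
    rw [e1, pow_succ]
    exact mul_dvd_mul_left _ hsolve
  have d2 : (p : ℤ) ^ (k + 1) ∣ (t * (p : ℤ) ^ k) ^ 2 *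
      (28*x^6 + 56*x^5*(t * (p : ℤ) ^ k) + 70*x^4*(t * (p : ℤ) ^ k)^2
        + 56*x^3*(t * (p : ℤ) ^ k)^3 + 28*x^2*(t * (p : ℤ) ^ k)^4
        + 8*x*(t * (p : ℤ) ^ k)^5 + (t * (p : ℤ) ^ k)^6) := by
    refine Dvd.dvd.mul_right ?_ _
    have : (t * (p : ℤ) ^ k) ^ 2 = t ^ 2 * (p : ℤ) ^ (2 * k) := by ring
    rw [this]
    exact Dvd.dvd.mul_left (pow_dvd_pow _ (by omega)) _
  exact dvd_add d1 d2

private lemma octic_int (p : ℕ) (hp : p.Prime) (hodd : p ≠ 2) (k : ℕ) (hk : 1 ≤ k) :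
    ∃ x : ℤ, (p : ℤ) ^ k ∣ x ^ 8 - 16 := by
  haveI : Fact p.Prime := ⟨hp⟩
  induction k with
  | zero => omega
  | succ k ih =>
    rcases Nat.eq_or_lt_of_le hk with h1 | h1
    · obtain ⟨y, hy⟩ := octic_base p hp hodd
      refine ⟨(y.val : ℤ), ?_⟩
      have hz : (((y.val : ℤ) ^ 8 - 16 : ℤ) : ZMod p) = 0 := by
        push_cast [ZMod.natCast_val, ZMod.cast_id]
        rw [hy]; ring
      have hdvd : (p : ℤ) ∣ (y.val : ℤ) ^ 8 - 16 :=
        (ZMod.intCast_zmod_eq_zero_iff_dvd _ p).mp hz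
      have hk0 : k = 0 := by omega
      subst hk0
      simpa using hdvd
    · obtain ⟨x, hx⟩ := ih (by omega)
      exact octic_lift p hp hodd k (by omega) x hx

theorem wang_solution_mod_prime_powers (p : ℕ) (hp : p.Prime) (hodd : p ≠ 2)
    (k : ℕ) (hk : 1 ≤ k) :
    ∃ x : ℕ, x ^ 8 ≡ 16 [MOD p ^ k] := by
  obtain ⟨x, hx⟩ := octic_int p hp hodd k hk
  have hm : (0 : ℤ) < (p : ℤ) ^ k := by
    have := hp.two_le; positivity
  refine ⟨(x % (p : ℤ) ^ k).toNat, ?_⟩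
  rw [← Int.natCast_modEq_iff]
  push_cast [Int.toNat_of_nonneg (Int.emod_nonneg x (ne_of_gt hm))]
  have h1 : (x % (p : ℤ) ^ k) ≡ x [ZMOD (p : ℤ) ^ k] := Int.emod_emod_of_dvd x dvd_rfl
  calc (x % (p : ℤ) ^ k) ^ 8 ≡ x ^ 8 [ZMOD (p : ℤ) ^ k] := h1.pow 8
    _ ≡ 16 [ZMOD (p : ℤ) ^ k] := (Int.modEq_iff_dvd.mpr (by
        rw [show (16 : ℤ) - x ^ 8 = -(x ^ 8 - 16) by ring]; exact dvd_neg.mpr hx)).symm.symm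
end

section
/- The set of continuous self-maps of the Golomb space is an F_{σδ} subset of the Polish space ℕ^ℕ (with the product of discrete topologies). -/
/-!
For a countable space `X` with a countable basis `B` and a space `Y` with a countable basis `C`,
`f : X → Y` is continuous iff for every `U ∈ C` and every `x : X` with `f x ∈ U` some `V ∈ B`
containing `x` is mapped into `U`. For fixed `U`, `x` and `V` this is a condition on the values
of `f` at the points of `V`, hence closed for pointwise convergence in discrete `Y`; quantifying
over the countably many `U`, `x` (intersection) and `V` (union) gives an `F_σδ` set.
The Golomb space qualifies: its basis is indexed by pairs of naturals.
-/

open Set TopologicalSpace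

def IsFσδ {α : Type*} [TopologicalSpace α] (s : Set α) : Prop :=
  ∃ F : ℕ → ℕ → Set α, (∀ i j, IsClosed (F i j)) ∧ s = ⋂ i, ⋃ j, F i j

theorem isFσδ_iInter_iUnion {α ι κ : Type*} [TopologicalSpace α] [Countable ι] [Countable κ]
    {G : ι → κ → Set α} (hG : ∀ i j, IsClosed (G i j)) : IsFσδ (⋂ i, ⋃ j, G i j) := by
  rcases isEmpty_or_nonempty ι with hι | hι
  · exact ⟨fun _ _ => univ, fun _ _ => isClosed_univ, by simp [iUnion_const]⟩
  rcases isEmpty_or_nonempty κ with hκ | hκ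
  · exact ⟨fun _ _ => ∅, fun _ _ => isClosed_empty, by simp [iInter_const]⟩
  obtain ⟨e, he⟩ := exists_surjective_nat ι
  obtain ⟨e', he'⟩ := exists_surjective_nat κ
  refine ⟨fun i j => G (e i) (e' j), fun _ _ => hG _ _, ?_⟩
  simp only [he'.iUnion_comp (G (e _)), he.iInter_comp fun i => ⋃ j, G i j]

section PointwiseDiscrete

variable {X Y : Type*} [TopologicalSpace Y] [DiscreteTopology Y]

theorem isClosed_setOf_apply_mem (x : X) (A : Set Y) : IsClosed {f : X → Y | f x ∈ A} :=
  (isClosed_discrete A).preimage (continuous_apply x)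

theorem isClosed_setOf_mapsTo (s : Set X) (t : Set Y) : IsClosed {f : X → Y | MapsTo f s t} := by
  simp only [MapsTo, ofPred_forall]
  exact isClosed_iInter fun x => isClosed_iInter fun _ => isClosed_setOf_apply_mem x t

theorem isClosed_setOf_apply_mem_imp_mapsTo (x : X) (U : Set Y) (V : Set X) :
    IsClosed {f : X → Y | f x ∈ U → x ∈ V ∧ MapsTo f V U} := by
  simp only [imp_iff_not_or, ofPred_or, ofPred_and]
  exact (isClosed_setOf_apply_mem x Uᶜ).union (isClosed_const.inter (isClosed_setOf_mapsTo V U))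

end PointwiseDiscrete

theorem setOf_continuous_eq_iInter_iUnion {X Y : Type*} [TopologicalSpace X] [TopologicalSpace Y]
    {B : Set (Set X)} {C : Set (Set Y)} (hB : IsTopologicalBasis B) (hC : IsTopologicalBasis C) :
    {f : X → Y | Continuous f} =
      ⋂ p : C × X, ⋃ V : B, {f | f p.2 ∈ p.1.1 → p.2 ∈ V.1 ∧ MapsTo f V p.1} := by
  ext f
  simp only [mem_ofPred_eq, mem_iInter, mem_iUnion, hC.continuous_iff, hB.isOpen_iff,
    Prod.forall, Subtype.exists, Subtype.forall, mem_preimage, exists_prop]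
  refine forall₂_congr fun U _ => forall_congr' fun x => ⟨fun h => ?_, fun h hx => ?_⟩
  · by_cases hx : f x ∈ U
    · obtain ⟨V, hV, hxV, hVU⟩ := h hx
      exact ⟨V, hV, fun _ => ⟨hxV, hVU⟩⟩
    · obtain ⟨V, hV, hxV, -⟩ := hB.exists_subset_of_mem_open (mem_univ x) isOpen_univ
      exact ⟨V, hV, fun hx' => absurd hx' hx⟩
  · obtain ⟨V, hV, hVU⟩ := h
    exact ⟨V, hV, (hVU hx).1, (hVU hx).2⟩

theorem isFσδ_setOf_continuous {X Y : Type*} [TopologicalSpace X] [TopologicalSpace Y]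
    [Countable X] [SecondCountableTopology X] [SecondCountableTopology Y] :
    @IsFσδ (X → Y) (@Pi.topologicalSpace X (fun _ => Y) (fun _ => ⊥)) {f | Continuous f} := by
  obtain ⟨B, hBc, -, hB⟩ := exists_countable_basis X
  obtain ⟨C, hCc, -, hC⟩ := exists_countable_basis Y
  have := hBc.to_subtype
  have := hCc.to_subtype
  rw [setOf_continuous_eq_iInter_iUnion hB hC]
  let _ : TopologicalSpace Y := ⊥
  have : DiscreteTopology Y := ⟨rfl⟩
  exact isFσδ_iInter_iUnion fun _ _ => isClosed_setOf_apply_mem_imp_mapsTo _ _ _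

theorem countable_golombBasis : golombBasis.Countable :=
  (countable_range fun p : ℕ × ℕ => {x : ℕ+ | ∃ n : ℕ, (x : ℕ) = p.1 + p.2 * n}).mono
    fun S ⟨a, b, _, _, _, hS⟩ => show S ∈ range _ from ⟨(a, b), hS.symm⟩

instance secondCountableTopology_golomb : SecondCountableTopology ℕ+ := SecondCountableTopology.mk' countable_golombBasis

theorem continuous_selfmaps_Fsigmadelta :
    ∃ F : ℕ → ℕ → Set (ℕ+ → ℕ+),
      (∀ i j, @IsClosed (ℕ+ → ℕ+) (@Pi.topologicalSpace ℕ+ (fun _ => ℕ+) (fun _ => ⊥)) (F i j)) ∧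
      {f : ℕ+ → ℕ+ | Continuous f} = ⋂ i, ⋃ j, F i j :=
  isFσδ_setOf_continuous
end

section
/- For distinct positive integers x, y and a square-free integer q > 1, the following are equivalent: (1) q is coprime with both x and y; (2) there exist Golomb-open neighborhoods U of x and V of y such that the intersection of the closures of U and V equals qℕ⁺; (3) there exist Golomb-open neighborhoods U of x and V of y with the intersection of their closures contained in qℕ⁺. -/
/-!
The closure of a progression `a + bℕ` consists of the `m` with `m ≡ a` modulo every divisor of `b`
coprime to `m` (Chinese remainder theorem). So for `q` coprime to `x` and `y`, the closures of
`x + q^k ℕ` and `y + q^k ℕ` with `q^k` large meet exactly in `qℕ⁺`: a common point prime to some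
`p ∣ q` would force `x ≡ y [MOD p^k]`. Conversely, if a prime `p ∣ q` divided `x`, shrinking `U`,
`V` to basic progressions one finds a common closure point prime to `p`.
-/

def arithProg (a b : ℕ) : Set ℕ+ := {z : ℕ+ | ∃ n : ℕ, (z : ℕ) = a + b * n}

lemma mem_arithProg_iff {a b : ℕ} {z : ℕ+} :
    z ∈ arithProg a b ↔ a ≤ (z : ℕ) ∧ (z : ℕ) ≡ a [MOD b] := by
  constructor
  · rintro ⟨n, hn⟩
    exact ⟨by omega, hn ▸ Nat.add_mul_mod_self_left a b n⟩
  · rintro ⟨hle, h⟩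
    obtain ⟨n, hn⟩ := (Nat.modEq_iff_dvd' hle).1 h.symm
    exact ⟨n, by omega⟩

lemma self_mem_arithProg (m : ℕ+) (b : ℕ) : m ∈ arithProg m b := ⟨0, by simp⟩

lemma arithProg_subset_of_dvd {a b c : ℕ} (h : b ∣ c) : arithProg a c ⊆ arithProg a b :=
  fun _ hz ↦ mem_arithProg_iff.2 ⟨(mem_arithProg_iff.1 hz).1, (mem_arithProg_iff.1 hz).2.of_dvd h⟩

lemma arithProg_subset_of_mem {a b : ℕ} {m : ℕ+} (hm : m ∈ arithProg a b) :
    arithProg m b ⊆ arithProg a b := by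
  intro z hz
  rw [mem_arithProg_iff] at hm hz ⊢
  exact ⟨hm.1.trans hz.1, hz.2.trans hm.2⟩

lemma isOpen_arithProg {a b : ℕ} (ha : 0 < a) (hb : 0 < b) (hab : a.Coprime b) :
    IsOpen (arithProg a b) :=
  TopologicalSpace.GenerateOpen.basic _
    (show arithProg a b ∈ golombBasis from ⟨a, b, ha, hb, hab, rfl⟩)

lemma exists_arithProg_subset_of_isOpen {O : Set ℕ+} (hO : IsOpen O) {m : ℕ+} (hm : m ∈ O) :
    ∃ e, 0 < e ∧ (m : ℕ).Coprime e ∧ arithProg m e ⊆ O := by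
  change TopologicalSpace.GenerateOpen golombBasis O at hO
  induction hO generalizing m with
  | basic S hS =>
    obtain ⟨a, b, -, hb, hab, rfl⟩ := hS
    obtain ⟨n, hn⟩ := hm
    exact ⟨b, hb, hn ▸ (Nat.coprime_add_mul_left_left a b n).2 hab,
      arithProg_subset_of_mem ⟨n, hn⟩⟩
  | univ => exact ⟨1, one_pos, Nat.coprime_one_right _, Set.subset_univ _⟩
  | inter S T _ _ ihS ihT =>
    obtain ⟨e₁, he₁, hme₁, hS⟩ := ihS hm.1
    obtain ⟨e₂, he₂, hme₂, hT⟩ := ihT hm.2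
    exact ⟨e₁ * e₂, Nat.mul_pos he₁ he₂, hme₁.mul_right hme₂,
      Set.subset_inter ((arithProg_subset_of_dvd (dvd_mul_right e₁ e₂)).trans hS)
        ((arithProg_subset_of_dvd (dvd_mul_left e₂ e₁)).trans hT)⟩
  | sUnion S _ ih =>
    obtain ⟨s, hs, hms⟩ := hm
    obtain ⟨e, he, hme, hsub⟩ := ih s hs hms
    exact ⟨e, he, hme, hsub.trans (Set.subset_sUnion_of_mem hs)⟩

lemma exists_pnat_modEq_modEq {n m a b : ℕ} (hn : 0 < n) (hm : 0 < m)
    (h : a ≡ b [MOD n.gcd m]) (c : ℕ) :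
    ∃ z : ℕ+, c < (z : ℕ) ∧ (z : ℕ) ≡ a [MOD n] ∧ (z : ℕ) ≡ b [MOD m] := by
  obtain ⟨k, hkn, hkm⟩ := Nat.chineseRemainder' h
  set t := n * m * (c + 1)
  have hct : c < t :=
    Nat.lt_of_lt_of_le c.lt_succ_self (Nat.le_mul_of_pos_left _ (Nat.mul_pos hn hm))
  have hkt : ∀ d, d ∣ t → k + t ≡ k [MOD d] := fun d hd ↦ by
    simpa using (Nat.modEq_zero_iff_dvd.2 hd).add_left k
  exact ⟨⟨k + t, by omega⟩, by simp only [PNat.mk_coe]; omega,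
    (hkt n ((dvd_mul_right n m).mul_right _)).trans hkn,
    (hkt m ((dvd_mul_left m n).mul_right _)).trans hkm⟩

lemma mem_closure_arithProg_iff {a b : ℕ} (hb : 0 < b) {m : ℕ+} :
    m ∈ closure (arithProg a b) ↔ ∀ e, e ∣ b → (m : ℕ).Coprime e → (m : ℕ) ≡ a [MOD e] := by
  rw [mem_closure_iff]
  constructor
  · intro h e heb hme
    obtain ⟨z, hzm, hza⟩ := h _ (isOpen_arithProg m.pos (Nat.pos_of_dvd_of_pos heb hb) hme)
      (self_mem_arithProg m e)
    exact (mem_arithProg_iff.1 hzm).2.symm.trans ((mem_arithProg_iff.1 hza).2.of_dvd heb)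
  · intro h O hO hmO
    obtain ⟨e, he, hme, hsub⟩ := exists_arithProg_subset_of_isOpen hO hmO
    obtain ⟨z, hz, hzm, hza⟩ := exists_pnat_modEq_modEq he hb
      (h _ (Nat.gcd_dvd_right e b) (hme.coprime_dvd_right (Nat.gcd_dvd_left e b))) (m + a)
    exact ⟨z, hsub (mem_arithProg_iff.2 ⟨by omega, hzm⟩), mem_arithProg_iff.2 ⟨by omega, hza⟩⟩

lemma mem_closure_arithProg_of_dvd_pow {a b n : ℕ} (hb : 0 < b) {m : ℕ+}
    (h : b ∣ (m : ℕ) ^ n) : m ∈ closure (arithProg a b) :=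
  (mem_closure_arithProg_iff hb).2 fun e heb hme ↦ by
    rw [Nat.Coprime.eq_one_of_dvd (hme.pow_left n).symm (heb.trans h)]
    exact Nat.modEq_one

lemma Squarefree.dvd_of_forall_prime_dvd {q n : ℕ} (hq : Squarefree q)
    (h : ∀ p, p.Prime → p ∣ q → p ∣ n) : q ∣ n := by
  rw [← Nat.prod_primeFactors_of_squarefree hq]
  exact Finset.prod_primes_dvd n (fun p hp ↦ (Nat.prime_of_mem_primeFactors hp).prime)
    fun p hp ↦ h p (Nat.prime_of_mem_primeFactors hp) (Nat.dvd_of_mem_primeFactors hp)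

theorem closure_arithProg_inter_closure_arithProg_eq {x y : ℕ+} (hxy : x ≠ y) {q : ℕ}
    (hq : Squarefree q) :
    closure (arithProg x (q ^ (x + y : ℕ))) ∩ closure (arithProg y (q ^ (x + y : ℕ))) =
      {z : ℕ+ | q ∣ (z : ℕ)} := by
  set k := (x + y : ℕ)
  have hqk : 0 < q ^ k := pow_pos (Nat.pos_of_ne_zero hq.ne_zero) k
  ext z
  constructor
  · rintro ⟨hzx, hzy⟩
    refine hq.dvd_of_forall_prime_dvd fun p hp hpq ↦ ?_
    by_contra hpz
    have hpk : p ^ k ∣ q ^ k := pow_dvd_pow_of_dvd hpq k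
    have hzp : (z : ℕ).Coprime (p ^ k) := ((hp.coprime_iff_not_dvd.2 hpz).symm).pow_right k
    have hxy' : (x : ℕ) ≡ y [MOD p ^ k] :=
      ((mem_closure_arithProg_iff hqk).1 hzx _ hpk hzp).symm.trans
        ((mem_closure_arithProg_iff hqk).1 hzy _ hpk hzp)
    have hkp : k < p ^ k := Nat.lt_two_pow_self.trans_le (Nat.pow_le_pow_left hp.two_le k)
    exact hxy (PNat.coe_injective (hxy'.eq_of_lt_of_lt (by omega) (by omega)))
  · intro hqz
    exact ⟨mem_closure_arithProg_of_dvd_pow hqk (pow_dvd_pow_of_dvd hqz k),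
      mem_closure_arithProg_of_dvd_pow hqk (pow_dvd_pow_of_dvd hqz k)⟩

/-- Writing `d = p ^ v * d'` with `p ∤ d'`, take `z ≡ y [MOD p ^ (v + 1)]` and `b * d' ∣ z`. -/
lemma exists_not_dvd_mem_closure_inter {x y b d p : ℕ} (hp : p.Prime) (hb : 0 < b) (hd : 0 < d)
    (hpb : ¬ p ∣ b) (hpy : ¬ p ∣ y) :
    ∃ z : ℕ+, z ∈ closure (arithProg x b) ∩ closure (arithProg y d) ∧ ¬ p ∣ (z : ℕ) := by
  obtain ⟨v, d', hpd', rfl⟩ := Nat.exists_eq_pow_mul_and_not_dvd hd.ne' p hp.ne_one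
  have hd' : 0 < d' := Nat.pos_of_ne_zero fun h ↦ hpd' (h ▸ dvd_zero p)
  have hcop : (p ^ (v + 1)).Coprime (b * d') :=
    (hp.coprime_iff_not_dvd.2 fun h ↦ (hp.dvd_mul.1 h).elim hpb hpd').pow_left _
  obtain ⟨z, -, hzy, hz0⟩ := exists_pnat_modEq_modEq (pow_pos hp.pos _) (Nat.mul_pos hb hd')
    (a := y) (b := 0) (hcop ▸ Nat.modEq_one) 0
  have hbd' : b * d' ∣ z := Nat.modEq_zero_iff_dvd.1 hz0
  refine ⟨z, ⟨mem_closure_arithProg_of_dvd_pow hb (n := 1)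
    (by simpa using (dvd_mul_right b d').trans hbd'), ?_⟩, ?_⟩
  · refine (mem_closure_arithProg_iff hd).2 fun e hed hze ↦ hzy.of_dvd ?_
    have hed' : e.Coprime d' := hze.symm.coprime_dvd_right ((dvd_mul_left d' b).trans hbd')
    exact (hed'.dvd_of_dvd_mul_right hed).trans (pow_dvd_pow p v.le_succ)
  · rwa [hzy.dvd_iff (dvd_pow_self p v.succ_ne_zero)]

lemma coprime_of_closure_inter_closure_subset {U V : Set ℕ+} {x y : ℕ+} {q : ℕ}
    (hU : IsOpen U) (hV : IsOpen V) (hxU : x ∈ U) (hyV : y ∈ V)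
    (h : closure U ∩ closure V ⊆ {z : ℕ+ | q ∣ (z : ℕ)}) : q.Coprime x := by
  obtain ⟨b, hb, hxb, hbU⟩ := exists_arithProg_subset_of_isOpen hU hxU
  obtain ⟨d, hd, hyd, hdV⟩ := exists_arithProg_subset_of_isOpen hV hyV
  have hS : closure (arithProg x b) ∩ closure (arithProg y d) ⊆ {z : ℕ+ | q ∣ (z : ℕ)} :=
    (Set.inter_subset_inter (closure_mono hbU) (closure_mono hdV)).trans h
  by_contra hqx
  obtain ⟨p, hp, hpq, hpx⟩ := Nat.Prime.not_coprime_iff_dvd.1 hqx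
  have hpb : ¬ p ∣ b := fun hpb ↦ hp.one_lt.ne' (Nat.eq_one_of_dvd_coprimes hxb hpx hpb)
  have hqbd : q ∣ b * d := hS (show (⟨b * d, Nat.mul_pos hb hd⟩ : ℕ+) ∈ _ ∩ _ from
    ⟨mem_closure_arithProg_of_dvd_pow hb (n := 1) (by simp),
      mem_closure_arithProg_of_dvd_pow hd (n := 1) (by simp)⟩)
  have hpd : p ∣ d := (hp.dvd_mul.1 (hpq.trans hqbd)).resolve_left hpb
  have hpy : ¬ p ∣ y := fun hpy ↦ hp.one_lt.ne' (Nat.eq_one_of_dvd_coprimes hyd hpy hpd)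
  obtain ⟨z, hzS, hpz⟩ := exists_not_dvd_mem_closure_inter hp hb hd hpb hpy
  exact hpz (hpq.trans (hS hzS))

theorem squarefree_closure_intersection_general (x y : ℕ+) (hxy : x ≠ y)
    (q : ℕ) (hq : Squarefree q) :
    (Nat.Coprime q x ∧ Nat.Coprime q y ↔
      ∃ U V : Set ℕ+, IsOpen U ∧ IsOpen V ∧ x ∈ U ∧ y ∈ V ∧
        closure U ∩ closure V = {z : ℕ+ | q ∣ (z : ℕ)}) ∧
    (Nat.Coprime q x ∧ Nat.Coprime q y ↔
      ∃ U V : Set ℕ+, IsOpen U ∧ IsOpen V ∧ x ∈ U ∧ y ∈ V ∧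
        closure U ∩ closure V ⊆ {z : ℕ+ | q ∣ (z : ℕ)}) := by
  have forward : Nat.Coprime q x ∧ Nat.Coprime q y →
      ∃ U V : Set ℕ+, IsOpen U ∧ IsOpen V ∧ x ∈ U ∧ y ∈ V ∧
        closure U ∩ closure V = {z : ℕ+ | q ∣ (z : ℕ)} := fun ⟨hx, hy⟩ ↦
    have hqk : 0 < q ^ (x + y : ℕ) := pow_pos (Nat.pos_of_ne_zero hq.ne_zero) _
    ⟨_, _, isOpen_arithProg x.pos hqk (hx.symm.pow_right _),
      isOpen_arithProg y.pos hqk (hy.symm.pow_right _), self_mem_arithProg x _,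
      self_mem_arithProg y _, closure_arithProg_inter_closure_arithProg_eq hxy hq⟩
  have backward : (∃ U V : Set ℕ+, IsOpen U ∧ IsOpen V ∧ x ∈ U ∧ y ∈ V ∧
      closure U ∩ closure V ⊆ {z : ℕ+ | q ∣ (z : ℕ)}) →
      Nat.Coprime q x ∧ Nat.Coprime q y := fun ⟨U, V, hU, hV, hxU, hyV, h⟩ ↦
    ⟨coprime_of_closure_inter_closure_subset hU hV hxU hyV h,
      coprime_of_closure_inter_closure_subset hV hU hyV hxU (Set.inter_comm _ _ ▸ h)⟩
  refine ⟨⟨forward, fun ⟨U, V, hU, hV, hxU, hyV, h⟩ ↦ backward ⟨U, V, hU, hV, hxU, hyV, h.subset⟩⟩,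
    ⟨fun h ↦ ?_, backward⟩⟩
  obtain ⟨U, V, hU, hV, hxU, hyV, h⟩ := forward h
  exact ⟨U, V, hU, hV, hxU, hyV, h.subset⟩

theorem squarefree_closure_intersection (x y : ℕ+) (hxy : x ≠ y)
    (q : ℕ) (hq : Squarefree q) (hq1 : 1 < q) :
    (Nat.Coprime q x ∧ Nat.Coprime q y ↔
      ∃ U V : Set ℕ+, IsOpen U ∧ IsOpen V ∧ x ∈ U ∧ y ∈ V ∧
        closure U ∩ closure V = {z : ℕ+ | q ∣ (z : ℕ)}) ∧
    (Nat.Coprime q x ∧ Nat.Coprime q y ↔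
      ∃ U V : Set ℕ+, IsOpen U ∧ IsOpen V ∧ x ∈ U ∧ y ∈ V ∧
        closure U ∩ closure V ⊆ {z : ℕ+ | q ∣ (z : ℕ)}) :=
  squarefree_closure_intersection_general x y hxy q hq
end
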